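/- arXiv:2310.13137 — 15 statements merged into one kernel-verified Lean document; each statement's English description precedes it below -/
import Mathlib

section
/- Let n ≥ 1, let ε₁ ≤ ε₂ ≤ … ≤ εₙ be positive reals, and let Δₙ = {w ∈ ℝⁿ : wᵢ ≥ 0 for all i, Σᵢ wᵢ = 1}. Define F(w) = (Σᵢ wᵢ²)/4 + 2·(max_{1≤i≤n} wᵢ/εᵢ)² for w ∈ Δₙ. If w ∈ Δₙ is such that there exist indices i < j with wᵢ/εᵢ < w_j/ε_j, then there exists w̃ ∈ Δₙ with F(w̃) < F(w). Consequently, any minimizer w* of F over Δₙ satisfies w*ᵢ/εᵢ ≥ w*_j/ε_j for all i < j. -/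
/-- For a nondecreasing positive privacy vector `ε` and
`F w = (∑ i, w i ^ 2) / 4 + 2 * (max_i w i / ε i) ^ 2` on the probability simplex,
any `w` in the simplex with `w i / ε i < w j / ε j` for some `i < j` can be strictly
improved, and consequently any minimizer `w*` of `F` over the simplex satisfies
`w* j / ε j ≤ w* i / ε i` for all `i < j`. -/
theorem adpm_weight_monotonicity (n : ℕ) (hn : 1 ≤ n) (ε : Fin n → ℝ)
    (hpos : ∀ i, 0 < ε i) (hmono : ∀ i j : Fin n, i ≤ j → ε i ≤ ε j)
    (F : (Fin n → ℝ) → ℝ)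
    (hF : ∀ w : Fin n → ℝ,
      F w = (∑ i, (w i) ^ 2) / 4 + 2 * (⨆ i, w i / ε i) ^ 2) :
    (∀ w : Fin n → ℝ, (∀ i, 0 ≤ w i) → (∑ i, w i) = 1 →
      (∃ i j : Fin n, i < j ∧ w i / ε i < w j / ε j) →
      ∃ w' : Fin n → ℝ, (∀ i, 0 ≤ w' i) ∧ (∑ i, w' i) = 1 ∧ F w' < F w) ∧
    (∀ w : Fin n → ℝ, (∀ i, 0 ≤ w i) → (∑ i, w i) = 1 →
      (∀ v : Fin n → ℝ, (∀ i, 0 ≤ v i) → (∑ i, v i) = 1 → F w ≤ F v) →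
      ∀ i j : Fin n, i < j → w j / ε j ≤ w i / ε i) := by
  haveI : Nonempty (Fin n) := ⟨⟨0, hn⟩⟩
  have key : ∀ w : Fin n → ℝ, (∀ i, 0 ≤ w i) → (∑ i, w i) = 1 →
      (∃ i j : Fin n, i < j ∧ w i / ε i < w j / ε j) →
      ∃ w' : Fin n → ℝ, (∀ i, 0 ≤ w' i) ∧ (∑ i, w' i) = 1 ∧ F w' < F w := by
    rintro w hw hsum ⟨i, j, hij, hlt⟩
    have hne : i ≠ j := ne_of_lt hij
    have hεi := hpos i
    have hεj := hpos j
    have hεij : ε i ≤ ε j := hmono i j hij.le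
    have hwij : w i < w j := by
      rw [div_lt_div_iff₀ hεi hεj] at hlt
      nlinarith [hw i, hw j]
    set δ : ℝ := min ((w j - w i) / 2) (ε i * (w j / ε j - w i / ε i)) with hδdef
    have hδpos : 0 < δ := lt_min (by linarith)
      (mul_pos hεi (by linarith [hlt]))
    have hδ1 : δ ≤ (w j - w i) / 2 := min_le_left _ _
    have hδ2 : δ ≤ ε i * (w j / ε j - w i / ε i) := min_le_right _ _
    set w' : Fin n → ℝ := fun k => if k = i then w i + δ else if k = j then w j - δ else w k
      with hw'def
    have hw'i : w' i = w i + δ := by simp [hw'def]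
    have hw'j : w' j = w j - δ := by simp [hw'def, hne.symm]
    have hw'k : ∀ k, k ≠ i → k ≠ j → w' k = w k := by
      intro k h1 h2; simp [hw'def, h1, h2]
    have hnn : ∀ k, 0 ≤ w' k := by
      intro k
      by_cases h1 : k = i
      · subst h1; rw [hw'i]; linarith [hw k]
      · by_cases h2 : k = j
        · subst h2; rw [hw'j]; linarith [hw i, hw k]
        · rw [hw'k k h1 h2]; exact hw k
    -- sum
    have hsum' : (∑ k, w' k) = 1 := by
      have h1 : ∀ k : Fin n, w' k = w k + ((if k = i then δ else 0) + (if k = j then -δ else 0)) := by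
        intro k
        by_cases h1 : k = i
        · subst h1; simp [hw'i, hne]
        · by_cases h2 : k = j
          · subst h2; simp [hw'j, h1]; ring
          · simp [hw'k k h1 h2, h1, h2]
      calc (∑ k, w' k)
          = (∑ k, w k) + ((∑ k : Fin n, if k = i then δ else 0)
            + (∑ k : Fin n, if k = j then (-δ) else 0)) := by
            rw [← Finset.sum_add_distrib, ← Finset.sum_add_distrib]
            exact Finset.sum_congr rfl fun k _ => h1 k
        _ = 1 := by
            rw [hsum, Finset.sum_ite_eq' Finset.univ i (fun _ => δ),
              Finset.sum_ite_eq' Finset.univ j (fun _ => (-δ))]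
            simp
    -- sum of squares
    have hsq : (∑ k, (w' k) ^ 2) = (∑ k, (w k) ^ 2) + (2 * δ * (w i - w j) + 2 * δ ^ 2) := by
      have h1 : ∀ k : Fin n, (w' k) ^ 2 = (w k) ^ 2
          + ((if k = i then 2 * δ * w i + δ ^ 2 else 0)
            + (if k = j then -(2 * δ * w j) + δ ^ 2 else 0)) := by
        intro k
        by_cases h1 : k = i
        · subst h1; simp [hw'i, hne]; ring
        · by_cases h2 : k = j
          · subst h2; simp [hw'j, h1]; ring
          · simp [hw'k k h1 h2, h1, h2]
      calc (∑ k, (w' k) ^ 2)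
          = (∑ k, (w k) ^ 2) + ((∑ k : Fin n, if k = i then 2 * δ * w i + δ ^ 2 else 0)
            + (∑ k : Fin n, if k = j then -(2 * δ * w j) + δ ^ 2 else 0)) := by
            rw [← Finset.sum_add_distrib, ← Finset.sum_add_distrib]
            exact Finset.sum_congr rfl fun k _ => h1 k
        _ = (∑ k, (w k) ^ 2) + (2 * δ * (w i - w j) + 2 * δ ^ 2) := by
            rw [Finset.sum_ite_eq' Finset.univ i, Finset.sum_ite_eq' Finset.univ j]
            simp; ring
    -- sup comparison
    have hbdd : BddAbove (Set.range fun k => w k / ε k) :=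
      Set.Finite.bddAbove (Set.finite_range _)
    have hbdd' : BddAbove (Set.range fun k => w' k / ε k) :=
      Set.Finite.bddAbove (Set.finite_range _)
    have hSle : (⨆ k, w' k / ε k) ≤ (⨆ k, w k / ε k) := by
      apply ciSup_le
      intro k
      by_cases h1 : k = i
      · subst h1
        have hstep : w' k / ε k ≤ w j / ε j := by
          rw [hw'i, add_div]
          have : δ / ε k ≤ w j / ε j - w k / ε k := by
            rw [div_le_iff₀ hεi] at *
            nlinarith [hδ2]
          linarith
        exact hstep.trans (le_ciSup hbdd j)
      · by_cases h2 : k = j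
        · subst h2
          have hstep : w' k / ε k ≤ w k / ε k := by
            rw [hw'j]
            gcongr
            linarith
          exact hstep.trans (le_ciSup hbdd k)
        · rw [hw'k k h1 h2]; exact le_ciSup hbdd k
    have hS'0 : 0 ≤ (⨆ k, w' k / ε k) := by
      have : (0 : ℝ) ≤ w' i / ε i := div_nonneg (hnn i) hεi.le
      exact this.trans (le_ciSup hbdd' i)
    have hSq : (⨆ k, w' k / ε k) ^ 2 ≤ (⨆ k, w k / ε k) ^ 2 :=
      pow_le_pow_left₀ hS'0 hSle 2
    refine ⟨w', hnn, hsum', ?_⟩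
    rw [hF w', hF w, hsq]
    have hdneg : 2 * δ * (w i - w j) + 2 * δ ^ 2 < 0 := by nlinarith
    linarith
  constructor
  · exact key
  · intro w hw hsum hmin i j hij
    by_contra h
    push_neg at h
    obtain ⟨w', hw', hsum', hF'⟩ := key w hw hsum ⟨i, j, hij, h⟩
    exact absurd (hmin w' hw' hsum') (not_le.mpr hF')
end

section
/- The function K(x) = (Σᵢ xᵢ² + 8)/(Σᵢ xᵢ)², defined on vectors x ∈ ℝⁿ with nonnegative entries and Σᵢ xᵢ > 0, is strictly quasi-convex: for any two distinct such vectors x ≠ y and any λ ∈ (0,1), K(λx + (1−λ)y) < max{K(x), K(y)}. -/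
set_option maxHeartbeats 1600000


/-- The function `K x = ((∑ i, x i ^ 2) + 8) / (∑ i, x i) ^ 2`, defined on
vectors with nonnegative entries and positive sum, is strictly quasi-convex. -/
theorem K_strictly_quasiconvex (n : ℕ) (x y : Fin n → ℝ)
    (hx : ∀ i, 0 ≤ x i) (hy : ∀ i, 0 ≤ y i)
    (hxs : 0 < ∑ i, x i) (hys : 0 < ∑ i, y i)
    (hxy : x ≠ y) (l : ℝ) (hl : l ∈ Set.Ioo (0 : ℝ) 1) :
    ((∑ i, (l * x i + (1 - l) * y i) ^ 2) + 8) / (∑ i, (l * x i + (1 - l) * y i)) ^ 2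
      < max (((∑ i, (x i) ^ 2) + 8) / (∑ i, x i) ^ 2)
            (((∑ i, (y i) ^ 2) + 8) / (∑ i, y i) ^ 2) := by
  obtain ⟨hl0, hl1⟩ := hl
  have hl1' : 0 < 1 - l := by linarith
  set S := ∑ i, x i with hS
  set T := ∑ i, y i with hT
  set A := ∑ i, (x i) ^ 2 with hA
  set B := ∑ i, (y i) ^ 2 with hB
  set P := ∑ i, x i * y i with hP
  set M := max ((A + 8) / S ^ 2) ((B + 8) / T ^ 2) with hM
  have hz1 : (∑ i, (l * x i + (1 - l) * y i)) = l * S + (1 - l) * T := by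
    rw [hS, hT, Finset.mul_sum, Finset.mul_sum, ← Finset.sum_add_distrib]
  have hz2 : (∑ i, (l * x i + (1 - l) * y i) ^ 2)
      = l ^ 2 * A + 2 * l * (1 - l) * P + (1 - l) ^ 2 * B := by
    rw [hA, hB, hP, Finset.mul_sum, Finset.mul_sum, Finset.mul_sum,
      ← Finset.sum_add_distrib, ← Finset.sum_add_distrib]
    exact Finset.sum_congr rfl fun i _ => by ring
  have hA0 : 0 ≤ A := Finset.sum_nonneg fun i _ => sq_nonneg _
  have hB0 : 0 ≤ B := Finset.sum_nonneg fun i _ => sq_nonneg _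
  have hP0 : 0 ≤ P := Finset.sum_nonneg fun i _ => mul_nonneg (hx i) (hy i)
  have hS2 : 0 < S ^ 2 := pow_pos hxs 2
  have hT2 : 0 < T ^ 2 := pow_pos hys 2
  have hMx : A + 8 ≤ M * S ^ 2 := by
    have := le_max_left ((A + 8) / S ^ 2) ((B + 8) / T ^ 2)
    rw [div_le_iff₀ hS2] at this; linarith
  have hMy : B + 8 ≤ M * T ^ 2 := by
    have := le_max_right ((A + 8) / S ^ 2) ((B + 8) / T ^ 2)
    rw [div_le_iff₀ hT2] at this; linarith
  have hMpos : 0 < M := lt_of_lt_of_le (div_pos (by linarith) hS2)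
    (le_max_left _ _)
  -- strict: 2P < A + B since x ≠ y
  have hdiff : 0 < ∑ i, (x i - y i) ^ 2 := by
    have hne : ∃ i, x i ≠ y i := by
      by_contra h
      push_neg at h
      exact hxy (funext h)
    obtain ⟨i, hi⟩ := hne
    refine Finset.sum_pos' (fun j _ => sq_nonneg _) ⟨i, Finset.mem_univ i, ?_⟩
    exact lt_of_le_of_ne (sq_nonneg _) (Ne.symm (pow_ne_zero 2 (sub_ne_zero.mpr hi)))
  have h2P : 2 * P < A + B := by
    have : (∑ i, (x i - y i) ^ 2) = A + B - 2 * P := by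
      rw [hA, hB, hP, Finset.mul_sum, ← Finset.sum_add_distrib, ← Finset.sum_sub_distrib]
      exact Finset.sum_congr rfl fun i _ => by ring
    linarith [this ▸ hdiff]
  -- Cauchy-Schwarz
  have hCS : P ^ 2 ≤ A * B := by
    simpa [hA, hB, hP] using Finset.sum_mul_sq_le_sq_mul_sq Finset.univ x y
  -- key: P + 8 < M * S * T
  have hkey : P + 8 < M * S * T := by
    have h1 : (P + 8) ^ 2 < (A + 8) * (B + 8) := by nlinarith
    have h2 : (A + 8) * (B + 8) ≤ (M * S * T) ^ 2 := by
      calc (A + 8) * (B + 8) ≤ (M * S ^ 2) * (M * T ^ 2) :=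
            mul_le_mul hMx hMy (by linarith) (by positivity)
        _ = (M * S * T) ^ 2 := by ring
    have hMST : 0 < M * S * T := by positivity
    nlinarith
  rw [hz1, hz2, div_lt_iff₀ (by positivity)]
  nlinarith [mul_le_mul_of_nonneg_left hMx (sq_nonneg l),
    mul_le_mul_of_nonneg_left hMy (sq_nonneg (1 - l)),
    mul_lt_mul_of_pos_left hkey (by positivity : (0:ℝ) < 2 * l * (1 - l))]
end

section
/- Let x, y ∈ ℝⁿ have nonnegative entries with Σᵢ xᵢ > 0, Σᵢ yᵢ > 0, and x ≠ y. Then (⟨x,y⟩ + 8)/((Σᵢ xᵢ)(Σᵢ yᵢ)) < max{(Σᵢ xᵢ² + 8)/(Σᵢ xᵢ)², (Σᵢ yᵢ² + 8)/(Σᵢ yᵢ)²}, where ⟨x,y⟩ = Σᵢ xᵢ yᵢ. -/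
/-- For distinct nonnegative vectors `x ≠ y` with positive sums,
`(⟨x,y⟩ + 8) / ((∑ x)(∑ y)) < max{(∑ x² + 8)/(∑ x)², (∑ y² + 8)/(∑ y)²}`. -/
theorem inner_bound_strict (n : ℕ) (x y : Fin n → ℝ)
    (hx : ∀ i, 0 ≤ x i) (hy : ∀ i, 0 ≤ y i)
    (hxs : 0 < ∑ i, x i) (hys : 0 < ∑ i, y i)
    (hxy : x ≠ y) :
    ((∑ i, x i * y i) + 8) / ((∑ i, x i) * (∑ i, y i))
      < max (((∑ i, (x i) ^ 2) + 8) / (∑ i, x i) ^ 2)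
            (((∑ i, (y i) ^ 2) + 8) / (∑ i, y i) ^ 2) := by
  set X := ∑ i, x i with hX
  set Y := ∑ i, y i with hY
  set A := ∑ i, (x i) ^ 2 with hA
  set B := ∑ i, (y i) ^ 2 with hB
  set C := ∑ i, x i * y i with hC
  have hC0 : 0 ≤ C := Finset.sum_nonneg fun i _ => mul_nonneg (hx i) (hy i)
  -- Cauchy-Schwarz
  have hcs : C ^ 2 ≤ A * B := by
    simpa [hA, hB, hC] using
      Finset.sum_mul_sq_le_sq_mul_sq (Finset.univ : Finset (Fin n)) x y
  -- strict 2C < A + B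
  have hdist : 0 < ∑ i, (x i - y i) ^ 2 := by
    obtain ⟨i, hi⟩ : ∃ i, x i ≠ y i := by
      by_contra h
      push_neg at h
      exact hxy (funext h)
    exact Finset.sum_pos' (fun j _ => sq_nonneg _)
      ⟨i, Finset.mem_univ i, by have h := sub_ne_zero.mpr hi; positivity⟩
  have hstrict : 2 * C < A + B := by
    have : ∑ i, (x i - y i) ^ 2 = A - 2 * C + B := by
      simp only [sub_sq, mul_assoc]
      rw [Finset.sum_add_distrib, Finset.sum_sub_distrib, ← Finset.mul_sum, hA, hB, hC]
    linarith [hdist, this ▸ hdist]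
  -- key: (C+8)^2 < (A+8)*(B+8)
  have hkey : (C + 8) ^ 2 < (A + 8) * (B + 8) := by nlinarith
  have hA0 : 0 < A + 8 := by nlinarith [Finset.sum_nonneg (fun i (_ : i ∈ Finset.univ) => sq_nonneg (x i)), hA]
  have hB0 : 0 < B + 8 := by
    have : 0 ≤ B := Finset.sum_nonneg fun i _ => sq_nonneg (y i)
    linarith
  set a := (A + 8) / X ^ 2 with ha
  set b := (B + 8) / Y ^ 2 with hb
  set c := (C + 8) / (X * Y) with hc
  have hXY : 0 < X * Y := mul_pos hxs hys
  have hcpos : 0 < c := div_pos (by linarith) hXY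
  have hapos : 0 < a := div_pos hA0 (by positivity)
  have hbpos : 0 < b := div_pos hB0 (by positivity)
  have hsq : c ^ 2 < a * b := by
    rw [hc, ha, hb, div_pow, div_mul_div_comm]
    have h1 : (X * Y) ^ 2 = X ^ 2 * Y ^ 2 := by ring
    rw [h1]
    exact (div_lt_div_iff_of_pos_right (by positivity)).mpr hkey
  by_contra h
  push_neg at h
  rw [max_le_iff] at h
  have : a * b ≤ c ^ 2 := by nlinarith [h.1, h.2]
  linarith
end

section
/- Let ε₁ ≤ … ≤ εₙ be positive reals and define r₁ = ε₁ and r_{k+1} = min{ε_{k+1}, (Σ_{i=1}^k rᵢ² + 8)/(Σ_{i=1}^k rᵢ)} for 1 ≤ k ≤ n−1. If saturation occurs at index j+1, i.e. r_{j+1} = (Σ_{i=1}^j rᵢ² + 8)/(Σ_{i=1}^j rᵢ), then saturation occurs at every index m with j+1 ≤ m ≤ n, and moreover r_{j+1} = r_{j+2} = … = rₙ. -/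
/-- For the ADPM weight sequence `r` (0-indexed), if saturation occurs at
(0-indexed) index `j`, i.e. `r j = (∑_{i<j} r i ^ 2 + 8)/(∑_{i<j} r i)`, then saturation
occurs at every later index `m < n`, and `r` is constant from index `j` on. -/
theorem saturation_propagates (n : ℕ) (ε r : ℕ → ℝ)
    (hpos : ∀ i < n, 0 < ε i)
    (hmono : ∀ i j : ℕ, i ≤ j → j < n → ε i ≤ ε j)
    (hr0 : r 0 = ε 0)
    (hrec : ∀ k : ℕ, k + 1 < n → r (k + 1) = min (ε (k + 1))
      (((∑ i ∈ Finset.range (k + 1), (r i) ^ 2) + 8) / (∑ i ∈ Finset.range (k + 1), r i)))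
    (j : ℕ) (hj1 : 1 ≤ j) (hjn : j < n)
    (hsat : r j = ((∑ i ∈ Finset.range j, (r i) ^ 2) + 8) / (∑ i ∈ Finset.range j, r i)) :
    ∀ m : ℕ, j ≤ m → m < n →
      r m = ((∑ i ∈ Finset.range m, (r i) ^ 2) + 8) / (∑ i ∈ Finset.range m, r i)
      ∧ r m = r j := by
  -- positivity of r
  have hrpos : ∀ k, k < n → 0 < r k := by
    intro k
    induction k using Nat.strong_induction_on with
    | _ k ih =>
      intro hk
      match k with
      | 0 => rw [hr0]; exact hpos 0 hk
      | k+1 =>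
        rw [hrec k hk]
        have hS : 0 < ∑ i ∈ Finset.range (k+1), r i :=
          Finset.sum_pos (fun i hi => ih i (Finset.mem_range.mp hi)
            (lt_trans (Finset.mem_range.mp hi) hk))
            ⟨0, Finset.mem_range.mpr (Nat.succ_pos k)⟩
        have hQ : (0:ℝ) < (∑ i ∈ Finset.range (k+1), (r i)^2) + 8 := by
          have : (0:ℝ) ≤ ∑ i ∈ Finset.range (k+1), (r i)^2 :=
            Finset.sum_nonneg (fun i _ => sq_nonneg _)
          linarith
        exact lt_min (hpos _ hk) (div_pos hQ hS)
  -- r k ≤ ε k for k ≥ 1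
  have hrle : ∀ k, 1 ≤ k → k < n → r k ≤ ε k := by
    intro k hk1 hkn
    obtain ⟨k, rfl⟩ := Nat.exists_eq_add_of_le hk1
    rw [Nat.add_comm] at *
    rw [hrec k hkn]
    exact min_le_left _ _
  have key : ∀ d : ℕ, j + d < n →
      (r (j+d) = ((∑ i ∈ Finset.range (j+d), (r i) ^ 2) + 8) / (∑ i ∈ Finset.range (j+d), r i)
        ∧ r (j+d) = r j) := by
    intro d
    induction d with
    | zero => intro _; exact ⟨hsat, rfl⟩
    | succ d ih =>
      intro hlt
      have hkn : j + d < n := Nat.lt_of_succ_lt hlt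
      obtain ⟨hsatk, heqk⟩ := ih hkn
      set k := j + d with hkdef
      have hS : 0 < ∑ i ∈ Finset.range k, r i :=
        Finset.sum_pos (fun i hi => hrpos i (lt_trans (Finset.mem_range.mp hi) hkn))
          ⟨0, Finset.mem_range.mpr (by omega)⟩
      have hrk : 0 < r k := hrpos k hkn
      have hS1 : 0 < ∑ i ∈ Finset.range (k+1), r i := by
        rw [Finset.sum_range_succ]; linarith
      -- numerator identity
      have hnum : (∑ i ∈ Finset.range (k+1), (r i)^2) + 8
          = r k * (∑ i ∈ Finset.range (k+1), r i) := by
        have h1 : (∑ i ∈ Finset.range k, (r i)^2) + 8 = r k * (∑ i ∈ Finset.range k, r i) := by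
          field_simp at hsatk
          linarith [hsatk]
        rw [Finset.sum_range_succ, Finset.sum_range_succ]
        ring_nf
        ring_nf at h1
        linarith [h1]
      have hval : ((∑ i ∈ Finset.range (k+1), (r i)^2) + 8) / (∑ i ∈ Finset.range (k+1), r i)
          = r k := by
        rw [hnum, mul_div_assoc, div_self (ne_of_gt hS1), mul_one]
      have hle : r k ≤ ε (k+1) := by
        calc r k ≤ ε k := hrle k (by omega) hkn
          _ ≤ ε (k+1) := hmono k (k+1) (Nat.le_succ k) hlt
      have hrk1 : r (k+1) = r k := by
        rw [hrec k hlt, hval, min_eq_right hle]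
      have : j + (d+1) = k + 1 := by omega
      rw [this, hrk1]
      exact ⟨hval.symm, heqk⟩
  intro m hjm hmn
  obtain ⟨d, rfl⟩ := Nat.exists_eq_add_of_le hjm
  exact key d hmn
end

section
/- Let ε₁ ≤ … ≤ εₙ be positive reals and define r₁ = ε₁ and r_{k+1} = min{ε_{k+1}, (Σ_{i=1}^k rᵢ² + 8)/(Σ_{i=1}^k rᵢ)} for 1 ≤ k ≤ n−1. Then the sequence r is nondecreasing: rᵢ ≤ r_k for all 1 ≤ i < k ≤ n. -/
/-- The ADPM weight sequence `r` (0-indexed: `r 0 = ε 0`,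
`r (k+1) = min (ε (k+1)) ((∑_{i<k+1} r i ^ 2 + 8)/(∑_{i<k+1} r i))`) is nondecreasing. -/
theorem r_monotone (n : ℕ) (ε r : ℕ → ℝ)
    (hpos : ∀ i < n, 0 < ε i)
    (hmono : ∀ i j : ℕ, i ≤ j → j < n → ε i ≤ ε j)
    (hr0 : r 0 = ε 0)
    (hrec : ∀ k : ℕ, k + 1 < n → r (k + 1) = min (ε (k + 1))
      (((∑ i ∈ Finset.range (k + 1), (r i) ^ 2) + 8) / (∑ i ∈ Finset.range (k + 1), r i))) :
    ∀ i k : ℕ, i < k → k < n → r i ≤ r k := by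
  -- main invariant
  have main : ∀ k, k < n → (∀ i, i ≤ k → 0 < r i) ∧ r k ≤ ε k ∧
      r k * (∑ i ∈ Finset.range k, r i) ≤ (∑ i ∈ Finset.range k, (r i) ^ 2) + 8 := by
    intro k
    induction k with
    | zero =>
      intro hn
      refine ⟨?_, ?_, ?_⟩
      · intro i hi
        interval_cases i
        rw [hr0]; exact hpos 0 hn
      · rw [hr0]
      · simp
    | succ k ih =>
      intro hk1
      have hk : k < n := Nat.lt_of_succ_lt hk1
      obtain ⟨hposr, hle, hineq⟩ := ih hk
      have hS1 : 0 < ∑ i ∈ Finset.range (k + 1), r i := by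
        apply Finset.sum_pos
        · intro i hi
          exact hposr i (Nat.lt_succ_iff.mp (Finset.mem_range.mp hi))
        · exact ⟨0, Finset.mem_range.mpr (Nat.succ_pos k)⟩
      have hS2 : (0:ℝ) ≤ ∑ i ∈ Finset.range (k + 1), (r i) ^ 2 :=
        Finset.sum_nonneg fun i _ => sq_nonneg _
      have hq : 0 < ((∑ i ∈ Finset.range (k + 1), (r i) ^ 2) + 8) /
          (∑ i ∈ Finset.range (k + 1), r i) := by positivity
      have hrk1 := hrec k hk1
      have hrpos : 0 < r (k + 1) := by
        rw [hrk1]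
        exact lt_min (hpos _ hk1) hq
      refine ⟨?_, ?_, ?_⟩
      · intro i hi
        rcases Nat.lt_succ_iff_lt_or_eq.mp (Nat.lt_succ_of_le hi) with h | h
        · exact hposr i (Nat.lt_succ_iff.mp h)
        · rw [h]; exact hrpos
      · rw [hrk1]; exact min_le_left _ _
      · have : r (k + 1) ≤ ((∑ i ∈ Finset.range (k + 1), (r i) ^ 2) + 8) /
            (∑ i ∈ Finset.range (k + 1), r i) := by
          rw [hrk1]; exact min_le_right _ _
        exact (le_div_iff₀ hS1).mp this
  -- single step
  have step : ∀ k, k + 1 < n → r k ≤ r (k + 1) := by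
    intro k hk1
    have hk : k < n := Nat.lt_of_succ_lt hk1
    obtain ⟨hposr, hle, hineq⟩ := main k hk
    have hrk : 0 < r k := hposr k le_rfl
    have hS1 : 0 < ∑ i ∈ Finset.range (k + 1), r i := by
      apply Finset.sum_pos
      · intro i hi
        exact hposr i (Nat.lt_succ_iff.mp (Finset.mem_range.mp hi))
      · exact ⟨0, Finset.mem_range.mpr (Nat.succ_pos k)⟩
    rw [hrec k hk1]
    refine le_min (hle.trans (hmono k (k+1) (Nat.le_succ k) hk1)) ?_
    rw [le_div_iff₀ hS1]
    rw [Finset.sum_range_succ, Finset.sum_range_succ (f := fun i => (r i)^2)]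
    nlinarith [hineq]
  -- chain
  intro i k hik hk
  induction k with
  | zero => omega
  | succ k ihk =>
    rcases Nat.lt_succ_iff_lt_or_eq.mp hik with h | h
    · exact (ihk h (Nat.lt_of_succ_lt hk)).trans (step k hk)
    · rw [h]; exact step k hk
end

section
/- Let ε₁ ≤ … ≤ εₙ be positive reals, define r₁ = ε₁ and r_{k+1} = min{ε_{k+1}, (Σ_{i=1}^k rᵢ² + 8)/(Σ_{i=1}^k rᵢ)} for 1 ≤ k ≤ n−1, and let D(ε) = {x ∈ ℝⁿ : xᵢ ≥ 0 for all i, x₁ = ε₁, and xᵢ/εᵢ ≥ x_j/ε_j for all i < j}. Then the point r = (r₁,…,rₙ) is a local minimum of f(x) = (Σᵢ xᵢ² + 8)/(4 (Σᵢ xᵢ)²) on D(ε): there is a neighborhood U of r in ℝⁿ such that f(r) ≤ f(x) for all x ∈ D(ε) ∩ U. -/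
/-!
The minimum is in fact global on `D(ε)`. Put `S = ∑ rᵢ`, `Q = ∑ rᵢ²` and `t = (Q + 8) / S`.
The recursion is a water-filling: by induction on the length, every `rᵢ` equals `min εᵢ t`,
since each new term is a weighted mean of the previous threshold and of itself. Points of
`D(ε)` satisfy `xᵢ ≤ εᵢ`, so `(t - rᵢ) (rᵢ² - xᵢ²) ≥ 0` for every `i`; summing gives
`t ∑ xᵢ² / rᵢ ≤ ∑ xᵢ² + 8`, and Sedrakyan's inequality `(∑ xᵢ)² ≤ S ∑ xᵢ² / rᵢ` turns this
into `f r ≤ f x`.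
-/

open Finset

section Threshold

noncomputable def threshold (c : ℝ) (r : ℕ → ℝ) (k : ℕ) : ℝ :=
  ((∑ i ∈ range k, r i ^ 2) + c) / ∑ i ∈ range k, r i

variable {c : ℝ} {r : ℕ → ℝ}

lemma threshold_pos (hc : 0 ≤ c) {k : ℕ} (hk : 0 < k) (hr : ∀ i < k, 0 < r i) :
    0 < threshold c r k := by
  have hS : 0 < ∑ i ∈ range k, r i :=
    sum_pos (fun i hi => hr i (mem_range.mp hi)) ⟨0, mem_range.mpr hk⟩
  have hQ : 0 < ∑ i ∈ range k, r i ^ 2 :=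
    sum_pos (fun i hi => pow_pos (hr i (mem_range.mp hi)) 2) ⟨0, mem_range.mpr hk⟩
  exact div_pos (by linarith) hS

/-- `threshold c r (k + 1)` is the mean of `threshold c r k` and `r k` with weights
`∑_{i<k} rᵢ` and `r k`. -/
lemma threshold_succ_mem_Icc {k : ℕ} (hS : 0 < ∑ i ∈ range k, r i) (hrk : 0 < r k)
    (hle : r k ≤ threshold c r k) :
    threshold c r (k + 1) ∈ Set.Icc (r k) (threshold c r k) := by
  unfold threshold at hle ⊢
  rw [le_div_iff₀ hS] at hle
  rw [sum_range_succ, sum_range_succ, Set.mem_Icc, le_div_iff₀ (by positivity),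
    div_le_div_iff₀ (by positivity) hS]
  constructor <;> nlinarith

end Threshold

section Recursion

variable {c : ℝ} {n : ℕ} {ε r : ℕ → ℝ}

lemma pos_of_threshold_rec (hc : 0 ≤ c) (hpos : ∀ i < n, 0 < ε i) (hr0 : r 0 = ε 0)
    (hrec : ∀ k, k + 1 < n → r (k + 1) = min (ε (k + 1)) (threshold c r (k + 1))) :
    ∀ i < n, 0 < r i := by
  intro i
  induction i using Nat.strong_induction_on with
  | _ i ih =>
    intro hi
    cases i with
    | zero => exact hr0 ▸ hpos 0 hi
    | succ k =>
      rw [hrec k hi]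
      exact lt_min (hpos _ hi)
        (threshold_pos hc k.succ_pos fun j hj => ih j hj (by omega))

lemma eq_min_threshold_of_rec (hc : 0 ≤ c) (hpos : ∀ i < n, 0 < ε i)
    (hmono : ∀ i j, i ≤ j → j < n → ε i ≤ ε j) (hr0 : r 0 = ε 0)
    (hrec : ∀ k, k + 1 < n → r (k + 1) = min (ε (k + 1)) (threshold c r (k + 1))) :
    ∀ k, 0 < k → k ≤ n → ∀ i < k, r i = min (ε i) (threshold c r k) := by
  have hr := pos_of_threshold_rec hc hpos hr0 hrec
  intro k hk
  induction k, hk using Nat.le_induction with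
  | base =>
    intro _ i hi
    obtain rfl : i = 0 := by omega
    have hε := hr0 ▸ hr 0 (by omega)
    rw [hr0, eq_comm, min_eq_left_iff, threshold, sum_range_one, sum_range_one, hr0,
      le_div_iff₀ hε]
    nlinarith
  | succ k hk ih =>
    intro hkn i hi
    have ih := ih (by omega)
    have hS : 0 < ∑ i ∈ range k, r i :=
      sum_pos (fun i hi => hr i ((mem_range.mp hi).trans (by omega))) ⟨0, mem_range.mpr hk⟩
    obtain ⟨k, rfl⟩ : ∃ k', k = k' + 1 := ⟨k - 1, by omega⟩
    have hrk := hrec k hkn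
    obtain ⟨hlo, hhi⟩ :=
      threshold_succ_mem_Icc hS (hr _ hkn) (hrk ▸ min_le_right _ _)
    rcases le_total (ε (k + 1)) (threshold c r (k + 1)) with hε | hε
    · -- `r (k + 1) = ε (k + 1)`, and by monotonicity every `ε i` stays below the new threshold
      rw [min_eq_left hε] at hrk
      have hεi : ε i ≤ threshold c r (k + 2) :=
        (hmono i (k + 1) (by omega) hkn).trans (hrk ▸ hlo)
      rcases Nat.lt_succ_iff_lt_or_eq.mp hi with hi | rfl
      · rw [ih i hi, min_eq_left hεi, min_eq_left (hεi.trans hhi)]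
      · rw [min_eq_left hεi, hrk]
    · -- `r (k + 1)` is the threshold itself, so the threshold does not move
      rw [min_eq_right hε] at hrk
      have heq : threshold c r (k + 2) = threshold c r (k + 1) :=
        le_antisymm hhi (hrk ▸ hlo)
      rcases Nat.lt_succ_iff_lt_or_eq.mp hi with hi | rfl
      · rw [heq, ih i hi]
      · rw [heq, hrk, min_eq_right hε]

end Recursion

lemma sum_sq_add_mul_sq_sum_le_of_eq_min {ι : Type*} (s : Finset ι) {ε r x : ι → ℝ}
    {c t : ℝ} (hc : 0 ≤ c) (hr : ∀ i ∈ s, 0 < r i) (hrε : ∀ i ∈ s, r i = min (ε i) t)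
    (hx : ∀ i ∈ s, 0 ≤ x i) (hxε : ∀ i ∈ s, x i ≤ ε i)
    (ht : t * ∑ i ∈ s, r i = (∑ i ∈ s, r i ^ 2) + c) :
    ((∑ i ∈ s, r i ^ 2) + c) * (∑ i ∈ s, x i) ^ 2 ≤
      ((∑ i ∈ s, x i ^ 2) + c) * (∑ i ∈ s, r i) ^ 2 := by
  rcases s.eq_empty_or_nonempty with rfl | hs
  · simp
  set W := ∑ i ∈ s, x i ^ 2 / r i
  have hterm : ∀ i ∈ s, t * (x i ^ 2 / r i) + r i ^ 2 ≤ x i ^ 2 + t * r i := by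
    intro i hi
    have hri := hr i hi
    suffices 0 ≤ (t - r i) * (r i ^ 2 - x i ^ 2) by
      rw [mul_div_assoc', div_add' _ _ _ hri.ne', div_le_iff₀ hri]
      nlinarith
    rcases le_total (ε i) t with hεt | htε
    · rw [hrε i hi, min_eq_left hεt] at hri ⊢
      exact mul_nonneg (by linarith) (by nlinarith [hx i hi, hxε i hi])
    · simp [hrε i hi, min_eq_right htε]
  have hW : t * W ≤ (∑ i ∈ s, x i ^ 2) + c := by
    have := sum_le_sum hterm
    rw [sum_add_distrib, sum_add_distrib, ← mul_sum, ← mul_sum] at this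
    linarith
  have hCS : (∑ i ∈ s, x i) ^ 2 ≤ (∑ i ∈ s, r i) * W := by
    have := sq_sum_div_le_sum_sq_div s x hr
    rwa [div_le_iff₀ (sum_pos hr hs), mul_comm] at this
  calc ((∑ i ∈ s, r i ^ 2) + c) * (∑ i ∈ s, x i) ^ 2
      ≤ ((∑ i ∈ s, r i ^ 2) + c) * ((∑ i ∈ s, r i) * W) := by gcongr
    _ = (∑ i ∈ s, r i) ^ 2 * (t * W) := by rw [← ht]; ring
    _ ≤ _ := by rw [mul_comm]; gcongr

/-- The ADPM weight vector `r` is a local minimum of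
`f x = ((∑ i, x i ^ 2) + 8) / (4 (∑ i, x i) ^ 2)` on the domain
`D(ε) = {x : x i ≥ 0, x 0 = ε 0, and x i / ε i ≥ x j / ε j for i < j}`. -/
theorem r_isLocalMinOn (n : ℕ) (hn : 0 < n) (ε r : ℕ → ℝ)
    (hpos : ∀ i < n, 0 < ε i)
    (hmono : ∀ i j : ℕ, i ≤ j → j < n → ε i ≤ ε j)
    (hr0 : r 0 = ε 0)
    (hrec : ∀ k : ℕ, k + 1 < n → r (k + 1) = min (ε (k + 1))
      (((∑ i ∈ Finset.range (k + 1), (r i) ^ 2) + 8) / (∑ i ∈ Finset.range (k + 1), r i))) :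
    IsLocalMinOn
      (fun x : Fin n → ℝ => ((∑ i, (x i) ^ 2) + 8) / (4 * (∑ i, x i) ^ 2))
      {x : Fin n → ℝ | (∀ i, 0 ≤ x i) ∧ x ⟨0, hn⟩ = ε 0 ∧
        ∀ i j : Fin n, i < j → x j / ε j.1 ≤ x i / ε i.1}
      (fun i : Fin n => r i.1) := by
  have hr := pos_of_threshold_rec (c := 8) (by norm_num) hpos hr0 hrec
  have hmin := eq_min_threshold_of_rec (c := 8) (by norm_num) hpos hmono hr0 hrec n hn le_rfl
  have hS : 0 < ∑ i : Fin n, r i := sum_pos (fun i _ => hr i i.2) ⟨⟨0, hn⟩, mem_univ _⟩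
  have ht : threshold 8 r n * ∑ i : Fin n, r i = (∑ i : Fin n, r i ^ 2) + 8 := by
    rw [Fin.sum_univ_eq_sum_range r] at hS
    rw [Fin.sum_univ_eq_sum_range r, Fin.sum_univ_eq_sum_range (r · ^ 2)]
    exact div_mul_cancel₀ _ hS.ne'
  refine IsMinOn.localize <| isMinOn_iff.mpr fun x ⟨hx, hx0, hxdec⟩ => ?_
  have hxε : ∀ i : Fin n, x i ≤ ε i := by
    intro i
    rcases eq_or_ne i ⟨0, hn⟩ with rfl | hi
    · exact hx0.le
    have := hxdec ⟨0, hn⟩ i (Fin.lt_def.mpr (Nat.pos_of_ne_zero fun h => hi (Fin.ext h)))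
    rwa [hx0, div_self (hpos 0 hn).ne', div_le_one (hpos i i.2)] at this
  have hxS : 0 < ∑ i : Fin n, x i :=
    (hx0 ▸ hpos 0 hn).trans_le (single_le_sum (fun i _ => hx i) (mem_univ _))
  have key := sum_sq_add_mul_sq_sum_le_of_eq_min (r := fun i : Fin n => r i) univ
    (by norm_num) (fun i _ => hr i i.2) (fun i _ => hmin i i.2) (fun i _ => hx i)
    (fun i _ => hxε i) ht
  rw [div_le_div_iff₀ (by positivity) (by positivity)]
  linarith
end

section
/- Let ε₁ ≤ … ≤ εₙ be positive reals, define r₁ = ε₁ and r_{k+1} = min{ε_{k+1}, (Σ_{i=1}^k rᵢ² + 8)/(Σ_{i=1}^k rᵢ)} for 1 ≤ k ≤ n−1, and let D(ε) = {x ∈ ℝⁿ : xᵢ ≥ 0 for all i, x₁ = ε₁, and xᵢ/εᵢ ≥ x_j/ε_j for all i < j}. Then r = (r₁,…,rₙ) belongs to D(ε) and is a global minimizer of f(x) = (Σᵢ xᵢ² + 8)/(4 (Σᵢ xᵢ)²) over D(ε): f(r) ≤ f(x) for every x ∈ D(ε). -/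
open Finset

private lemma adpm_inv (n : ℕ) (ε r : ℕ → ℝ)
    (hpos : ∀ i < n, 0 < ε i)
    (hmono : ∀ i j : ℕ, i ≤ j → j < n → ε i ≤ ε j)
    (hr0 : r 0 = ε 0)
    (hrec : ∀ k : ℕ, k + 1 < n → r (k + 1) = min (ε (k + 1))
      (((∑ i ∈ Finset.range (k + 1), (r i) ^ 2) + 8) / (∑ i ∈ Finset.range (k + 1), r i))) :
    ∀ k, k < n →
      ((∀ i ≤ k, 0 < r i ∧ r i ≤ ε i) ∧
      r k * (∑ i ∈ Finset.range (k+1), r i) ≤ (∑ i ∈ Finset.range (k+1), (r i)^2) + 8 ∧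
      ((∀ i ≤ k, r i = ε i) ∨
        (r k * (∑ i ∈ Finset.range (k+1), r i) = (∑ i ∈ Finset.range (k+1), (r i)^2) + 8 ∧
         ∀ i ≤ k, r i = r k ∨ (r i = ε i ∧ r i ≤ r k)))) := by
  intro k
  induction k with
  | zero =>
    intro hk
    have h0 : 0 < ε 0 := hpos 0 hk
    refine ⟨?_, ?_, Or.inl ?_⟩
    · intro i hi
      have : i = 0 := Nat.le_zero.mp hi
      subst this
      exact ⟨hr0 ▸ h0, le_of_eq hr0⟩
    · simp only [zero_add, Finset.sum_range_one]
      nlinarith [hr0 ▸ h0]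
    · intro i hi
      have : i = 0 := Nat.le_zero.mp hi
      subst this
      exact hr0
  | succ k ih =>
    intro hk1
    have hk : k < n := by omega
    obtain ⟨hpr, hB, hD⟩ := ih hk
    set S := ∑ i ∈ Finset.range (k+1), r i with hSdef
    set Q := ∑ i ∈ Finset.range (k+1), (r i)^2 with hQdef
    have hS : 0 < S := by
      rw [hSdef]
      exact Finset.sum_pos
        (fun i hi => (hpr i (Nat.lt_succ_iff.mp (Finset.mem_range.mp hi))).1)
        ⟨0, by simp⟩
    have hQ : 0 ≤ Q := by
      rw [hQdef]; exact Finset.sum_nonneg fun i _ => sq_nonneg _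
    have hQ8 : 0 < Q + 8 := by linarith
    have hrk1 : r (k+1) = min (ε (k+1)) ((Q + 8) / S) := hrec k hk1
    have hεpos : 0 < ε (k+1) := hpos (k+1) hk1
    have hrpos : 0 < r (k+1) := by
      rw [hrk1]; exact lt_min hεpos (div_pos hQ8 hS)
    have hrle : r (k+1) ≤ ε (k+1) := hrk1 ▸ min_le_left _ _
    have hle_div : r (k+1) ≤ (Q + 8) / S := hrk1 ▸ min_le_right _ _
    have hmul : r (k+1) * S ≤ Q + 8 := (le_div_iff₀ hS).mp hle_div
    have hsum1 : (∑ i ∈ Finset.range (k+2), r i) = S + r (k+1) := by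
      rw [Finset.sum_range_succ, hSdef]
    have hsum2 : (∑ i ∈ Finset.range (k+2), (r i)^2) = Q + (r (k+1))^2 := by
      rw [Finset.sum_range_succ, hQdef]
    refine ⟨?_, ?_, ?_⟩
    · intro i hi
      by_cases hik : i ≤ k
      · exact hpr i hik
      · have : i = k+1 := by omega
        subst this
        exact ⟨hrpos, hrle⟩
    · rw [hsum1, hsum2]; nlinarith [hmul]
    · rcases hD with hall | ⟨hEq, hdi⟩
      · rcases le_total (ε (k+1)) ((Q + 8) / S) with hle | hge
        · left
          intro i hi
          by_cases hik : i ≤ k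
          · exact hall i hik
          · have : i = k+1 := by omega
            subst this
            rw [hrk1, min_eq_left hle]
        · have hr' : r (k+1) = (Q + 8) / S := by rw [hrk1, min_eq_right hge]
          have hEq' : r (k+1) * S = Q + 8 := by
            rw [hr', div_mul_cancel₀ _ (ne_of_gt hS)]
          refine Or.inr ⟨?_, ?_⟩
          · rw [hsum1, hsum2]; linear_combination hEq'
          · intro i hi
            by_cases hik : i ≤ k
            · right
              refine ⟨hall i hik, ?_⟩
              have h2 : ε i ≤ ε k := hmono i k hik hk
              have h3 : r k ≤ (Q + 8) / S := (le_div_iff₀ hS).mpr hB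
              calc r i = ε i := hall i hik
                _ ≤ ε k := h2
                _ = r k := (hall k le_rfl).symm
                _ ≤ (Q + 8) / S := h3
                _ = r (k+1) := hr'.symm
            · have : i = k+1 := by omega
              subst this
              left; rfl
      · have hθ : (Q + 8) / S = r k := by
          rw [← hEq, mul_div_assoc, div_self (ne_of_gt hS), mul_one]
        have hεk1 : (Q + 8) / S ≤ ε (k+1) := by
          rw [hθ]
          exact le_trans (hpr k le_rfl).2 (hmono k (k+1) (by omega) hk1)
        have hr' : r (k+1) = r k := by rw [hrk1, min_eq_right hεk1, hθ]
        refine Or.inr ⟨?_, ?_⟩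
        · rw [hsum1, hsum2, hr']; linear_combination hEq
        · intro i hi
          by_cases hik : i ≤ k
          · rcases hdi i hik with h | ⟨h1, h2⟩
            · left; rw [h, hr']
            · right; exact ⟨h1, h2.trans (le_of_eq hr'.symm)⟩
          · have : i = k+1 := by omega
            subst this
            left; rfl


/-- The ADPM weight vector `r` belongs to the domain
`D(ε) = {x : x i ≥ 0, x 0 = ε 0, and x i / ε i ≥ x j / ε j for i < j}` and is a global
minimizer over `D(ε)` of `f x = ((∑ i, x i ^ 2) + 8) / (4 (∑ i, x i) ^ 2)`. -/
theorem r_isGlobalMinOn (n : ℕ) (hn : 0 < n) (ε r : ℕ → ℝ)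
    (hpos : ∀ i < n, 0 < ε i)
    (hmono : ∀ i j : ℕ, i ≤ j → j < n → ε i ≤ ε j)
    (hr0 : r 0 = ε 0)
    (hrec : ∀ k : ℕ, k + 1 < n → r (k + 1) = min (ε (k + 1))
      (((∑ i ∈ Finset.range (k + 1), (r i) ^ 2) + 8) / (∑ i ∈ Finset.range (k + 1), r i))) :
    ((fun i : Fin n => r i.1) ∈
      {x : Fin n → ℝ | (∀ i, 0 ≤ x i) ∧ x ⟨0, hn⟩ = ε 0 ∧
        ∀ i j : Fin n, i < j → x j / ε j.1 ≤ x i / ε i.1}) ∧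
    ∀ x : Fin n → ℝ,
      x ∈ {x : Fin n → ℝ | (∀ i, 0 ≤ x i) ∧ x ⟨0, hn⟩ = ε 0 ∧
        ∀ i j : Fin n, i < j → x j / ε j.1 ≤ x i / ε i.1} →
      ((∑ i : Fin n, (r i.1) ^ 2) + 8) / (4 * (∑ i : Fin n, r i.1) ^ 2)
        ≤ ((∑ i, (x i) ^ 2) + 8) / (4 * (∑ i, x i) ^ 2) := by
  obtain ⟨hpr, hB, hD⟩ := adpm_inv n ε r hpos hmono hr0 hrec (n-1) (by omega)
  have hn' : n - 1 + 1 = n := by omega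
  rw [hn'] at hB hD
  set Sn := ∑ i ∈ Finset.range n, r i with hSdef
  set Qn := ∑ i ∈ Finset.range n, (r i)^2 with hQdef
  have posr : ∀ i < n, 0 < r i := fun i hi => (hpr i (by omega)).1
  have rleε : ∀ i < n, r i ≤ ε i := fun i hi => (hpr i (by omega)).2
  have hSn : 0 < Sn := by
    rw [hSdef]
    exact Finset.sum_pos (fun i hi => posr i (Finset.mem_range.mp hi)) ⟨0, by simp [hn]⟩
  have hQn : 0 ≤ Qn := by rw [hQdef]; exact Finset.sum_nonneg fun i _ => sq_nonneg _
  have hQn8 : (0:ℝ) < Qn + 8 := by linarith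
  -- dichotomy
  have dich : ∀ i < n, r i * Sn = Qn + 8 ∨ (r i = ε i ∧ r i * Sn ≤ Qn + 8) := by
    intro i hi
    rcases hD with hall | ⟨hEq, hdi⟩
    · right
      refine ⟨hall i (by omega), ?_⟩
      have h1 : r i ≤ r (n-1) := by
        rw [hall i (by omega), hall (n-1) le_rfl]
        exact hmono i (n-1) (by omega) (by omega)
      calc r i * Sn ≤ r (n-1) * Sn := by nlinarith [hSn]
        _ ≤ Qn + 8 := hB
    · rcases hdi i (by omega) with h | ⟨h1, h2⟩
      · left; rw [h]; exact hEq
      · right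
        refine ⟨h1, ?_⟩
        calc r i * Sn ≤ r (n-1) * Sn := by nlinarith [hSn]
          _ = Qn + 8 := hEq
  constructor
  · refine ⟨fun i => (posr i.1 i.isLt).le, hr0, ?_⟩
    intro i j hij
    have hij' : i.1 < j.1 := hij
    have hεi : 0 < ε i.1 := hpos i.1 i.isLt
    have hεj : 0 < ε j.1 := hpos j.1 j.isLt
    have hεij : ε i.1 ≤ ε j.1 := hmono i.1 j.1 hij'.le j.isLt
    simp only
    rcases dich i.1 i.isLt with hi | ⟨hiε, _⟩
    · rcases dich j.1 j.isLt with hj | ⟨hjε, hjle⟩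
      · have hji : r j.1 = r i.1 := by
          have := hi.trans hj.symm
          exact mul_right_cancel₀ (ne_of_gt hSn) this.symm
        rw [hji]
        exact div_le_div_of_nonneg_left (posr i.1 i.isLt).le hεi hεij
      · -- r j = ε j, r j * Sn ≤ Qn + 8 = r i * Sn so r j ≤ r i
        have hrji : r j.1 ≤ r i.1 := by
          have : r j.1 * Sn ≤ r i.1 * Sn := by rw [hi]; exact hjle
          exact le_of_mul_le_mul_right this hSn
        have hεiri : ε i.1 ≤ r i.1 := by
          calc ε i.1 ≤ ε j.1 := hεij
            _ = r j.1 := hjε.symm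
            _ ≤ r i.1 := hrji
        rw [hjε, div_self (ne_of_gt hεj)]
        exact (one_le_div hεi).mpr hεiri
    · rw [hiε, div_self (ne_of_gt hεi)]
      exact div_le_one_of_le₀ (rleε j.1 j.isLt) hεj.le
  · intro x hx
    obtain ⟨hx0, hxε0, hxr⟩ := hx
    have hxle : ∀ i : Fin n, x i ≤ ε i.1 := by
      intro i
      by_cases h0 : i.1 = 0
      · have : i = ⟨0, hn⟩ := Fin.ext h0
        rw [this, hxε0]
      · have h0lt : (⟨0, hn⟩ : Fin n) < i := by
          simp [Fin.lt_def]; omega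
        have := hxr ⟨0, hn⟩ i h0lt
        rw [hxε0, div_self (ne_of_gt (hpos 0 (by omega)))] at this
        exact (div_le_one (hpos i.1 i.isLt)).mp this
    set s := ∑ i : Fin n, x i with hsdef
    set X2 := ∑ i : Fin n, (x i)^2 with hX2def
    have hs : 0 < s := by
      rw [hsdef]
      refine Finset.sum_pos' (fun i _ => hx0 i) ⟨⟨0, hn⟩, Finset.mem_univ _, ?_⟩
      rw [hxε0]; exact hpos 0 (by omega)
    have hrfin : (∑ i : Fin n, r i.1) = Sn := by
      rw [hSdef]; exact Fin.sum_univ_eq_sum_range _ n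
    have hrfin2 : (∑ i : Fin n, (r i.1)^2) = Qn := by
      rw [hQdef]; exact Fin.sum_univ_eq_sum_range (fun k => (r k)^2) n
    -- Cauchy-Schwarz (Sedrakyan)
    set A := ∑ i : Fin n, (x i)^2 / r i.1 with hAdef
    have hCS : s^2 ≤ A * Sn := by
      have := Finset.sq_sum_div_le_sum_sq_div Finset.univ x
        (g := fun i : Fin n => r i.1) (fun i _ => posr i.1 i.isLt)
      rw [hrfin] at this
      rw [← hAdef] at this
      calc s^2 = s^2 / Sn * Sn := by field_simp
        _ ≤ A * Sn := by
            apply mul_le_mul_of_nonneg_right _ hSn.le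
            exact this
    -- key per-term inequality
    have hterm : ∀ i ∈ Finset.univ (α := Fin n),
        (Qn + 8) * ((x i)^2 / r i.1) ≤ Sn * (x i)^2 + r i.1 * (Qn + 8) - (r i.1)^2 * Sn := by
      intro i _
      have hri : 0 < r i.1 := posr i.1 i.isLt
      rcases dich i.1 i.isLt with hEqi | ⟨hiε, hile⟩
      · rw [← hEqi]
        have heq : r i.1 * Sn * ((x i)^2 / r i.1) = Sn * (x i)^2 := by
          field_simp
        have heq2 : Sn * (x i)^2 + r i.1 * (r i.1 * Sn) - (r i.1)^2 * Sn = Sn * (x i)^2 := by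
          ring
        rw [heq, heq2]
      · have hxri : x i ≤ r i.1 := by rw [hiε]; exact hxle i
        have hx2 : (0:ℝ) ≤ (r i.1)^2 - (x i)^2 := by nlinarith [hx0 i]
        have hkey : (0:ℝ) ≤ (Qn + 8 - r i.1 * Sn) * ((r i.1)^2 - (x i)^2) :=
          mul_nonneg (by linarith) hx2
        rw [← mul_div_assoc, div_le_iff₀ hri]
        nlinarith [hkey]
    have hsum : (Qn + 8) * A ≤ Sn * (X2 + 8) := by
      have h1 : (Qn + 8) * A = ∑ i : Fin n, (Qn + 8) * ((x i)^2 / r i.1) := by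
        rw [hAdef, Finset.mul_sum]
      have h2 : (∑ i : Fin n, (Sn * (x i)^2 + r i.1 * (Qn + 8) - (r i.1)^2 * Sn))
          = Sn * (X2 + 8) := by
        rw [Finset.sum_sub_distrib, Finset.sum_add_distrib, ← Finset.mul_sum,
          ← Finset.sum_mul, ← Finset.sum_mul, hrfin]
        have : (∑ i : Fin n, (r i.1)^2) = Qn := hrfin2
        rw [this, ← hX2def]
        ring
      rw [h1, ← h2]
      exact Finset.sum_le_sum hterm
    rw [hrfin, hrfin2]
    rw [div_le_div_iff₀ (by positivity) (by positivity)]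
    nlinarith [mul_le_mul_of_nonneg_left hCS hQn8.le,
      mul_le_mul_of_nonneg_right hsum hSn.le, hs, hSn]
end

section
/- Let ε₁ ≤ … ≤ εₙ be positive reals satisfying the unsaturated condition ε_k · (Σ_{i=1}^{k−1} εᵢ) ≤ Σ_{i=1}^{k−1} εᵢ² + 8 for all 2 ≤ k ≤ n. Then for all indices 1 ≤ i < j ≤ n, ε_j ≤ εᵢ + 8/(Σ_{m=1}^i ε_m). -/
/-- Under the unsaturated condition
`ε k * (∑_{i<k} ε i) ≤ (∑_{i<k} ε i ^ 2) + 8` for all `1 ≤ k < n` (0-indexed),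
for all `i < j < n` we have `ε j ≤ ε i + 8 / (∑_{m ≤ i} ε m)`. -/
theorem unsaturated_eps_gap (n : ℕ) (ε : ℕ → ℝ)
    (hpos : ∀ i < n, 0 < ε i)
    (hmono : ∀ i j : ℕ, i ≤ j → j < n → ε i ≤ ε j)
    (hunsat : ∀ k : ℕ, 1 ≤ k → k < n →
      ε k * (∑ i ∈ Finset.range k, ε i) ≤ (∑ i ∈ Finset.range k, (ε i) ^ 2) + 8) :
    ∀ i j : ℕ, i < j → j < n →
      ε j ≤ ε i + 8 / (∑ m ∈ Finset.range (i + 1), ε m) := by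
  intro i j hij hjn
  have hin : i < n := lt_trans hij hjn
  set S := ∑ m ∈ Finset.range (i + 1), ε m with hS
  have hSpos : 0 < S := by
    apply Finset.sum_pos
    · intro m hm
      exact hpos m (lt_of_lt_of_le (Finset.mem_range.mp hm) (le_of_lt (Nat.lt_of_le_of_lt (Nat.succ_le_of_lt hij) hjn)))
    · exact ⟨0, Finset.mem_range.mpr (Nat.succ_pos i)⟩
  have key : ∑ m ∈ Finset.range j, ε m * (ε j - ε m) ≤ 8 := by
    have h := hunsat j (Nat.one_le_of_lt hij) hjn
    have : ∑ m ∈ Finset.range j, ε m * (ε j - ε m)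
        = ε j * (∑ m ∈ Finset.range j, ε m) - ∑ m ∈ Finset.range j, (ε m) ^ 2 := by
      rw [Finset.mul_sum, ← Finset.sum_sub_distrib]
      apply Finset.sum_congr rfl
      intro m _
      ring
    linarith [this]
  have lower : S * (ε j - ε i) ≤ ∑ m ∈ Finset.range j, ε m * (ε j - ε m) := by
    have h1 : S * (ε j - ε i) = ∑ m ∈ Finset.range (i + 1), ε m * (ε j - ε i) := by
      rw [hS, Finset.sum_mul]
    rw [h1]
    apply le_trans (Finset.sum_le_sum ?_) (Finset.sum_le_sum_of_subset_of_nonneg ?_ ?_)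
    · intro m hm
      have hmi : m ≤ i := Nat.lt_succ_iff.mp (Finset.mem_range.mp hm)
      have hmpos : 0 < ε m := hpos m (lt_of_le_of_lt hmi hin)
      have : ε m ≤ ε i := hmono m i hmi hin
      nlinarith
    · intro m hm
      exact Finset.mem_range.mpr (lt_of_lt_of_le (Finset.mem_range.mp hm) hij)
    · intro m hm _
      have hmj : m < j := Finset.mem_range.mp hm
      have hmpos : 0 < ε m := hpos m (lt_trans hmj hjn)
      have : ε m ≤ ε j := hmono m j (le_of_lt hmj) hjn
      nlinarith
  have : ε j - ε i ≤ 8 / S := (le_div_iff₀ hSpos).mpr (by nlinarith)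
  linarith
end

section
/- Let ε₁ ≤ … ≤ εₙ be positive reals, let 1 ≤ i ≤ n, and suppose εₙ ≤ εᵢ + 8/(Σ_{m=1}^i ε_m) and εᵢ > C for some C > 0. Then (1 + 8/C²)² (Σ_{m=i}^n ε_m)² ≥ (n−i+1) · Σ_{m=i}^n ε_m². -/
/-- For a nondecreasing positive sequence `ε` (0-indexed, of length `n`),
if `ε (n-1) ≤ ε i + 8 / (∑_{m ≤ i} ε m)` and `ε i > C` with `C > 0`, then
`(1 + 8/C²)² * (∑_{m=i}^{n-1} ε m)² ≥ (n - i) * ∑_{m=i}^{n-1} ε m ^ 2`. -/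
theorem segment_sum_bound_sep (n : ℕ) (ε : ℕ → ℝ)
    (hpos : ∀ i < n, 0 < ε i)
    (hmono : ∀ i j : ℕ, i ≤ j → j < n → ε i ≤ ε j)
    (i : ℕ) (hi : i < n) (C : ℝ) (hC : 0 < C)
    (hgap : ε (n - 1) ≤ ε i + 8 / (∑ m ∈ Finset.range (i + 1), ε m))
    (hsep : C < ε i) :
    ((n - i : ℕ) : ℝ) * (∑ m ∈ Finset.Ico i n, (ε m) ^ 2)
      ≤ (1 + 8 / C ^ 2) ^ 2 * (∑ m ∈ Finset.Ico i n, ε m) ^ 2 := by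
  set S := ∑ m ∈ Finset.range (i + 1), ε m with hSdef
  have hεi : 0 < ε i := hpos i hi
  have hS : ε i ≤ S := by
    apply Finset.single_le_sum (f := ε)
    · intro m hm
      exact (hpos m (lt_of_lt_of_le (Finset.mem_range.mp hm) hi)).le
    · exact Finset.self_mem_range_succ i
  have hSpos : 0 < S := lt_of_lt_of_le hεi hS
  set K : ℝ := 1 + 8 / C ^ 2 with hKdef
  have hK1 : 1 ≤ K := le_add_of_nonneg_right (by positivity)
  have hub : ∀ m ∈ Finset.Ico i n, ε m ≤ K * ε i := by
    intro m hm
    obtain ⟨hm1, hm2⟩ := Finset.mem_Ico.mp hm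
    have h1 : ε m ≤ ε (n - 1) := hmono m (n - 1) (by omega) (by omega)
    have h2 : 8 / S ≤ 8 / ε i := by
      apply div_le_div_of_nonneg_left (by norm_num) hεi hS
    have h3 : 8 / ε i ≤ (8 / C ^ 2) * ε i := by
      rw [div_le_iff₀ hεi]
      have hC2 : C ^ 2 ≤ ε i * ε i := by nlinarith
      rw [div_mul_eq_mul_div, div_mul_eq_mul_div, le_div_iff₀ (by positivity)]
      nlinarith
    calc ε m ≤ ε i + 8 / S := le_trans h1 hgap
      _ ≤ ε i + (8 / C ^ 2) * ε i := by linarith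
      _ = K * ε i := by ring
  have hlb : ∀ m ∈ Finset.Ico i n, ε i ≤ ε m := fun m hm => by
    obtain ⟨hm1, hm2⟩ := Finset.mem_Ico.mp hm
    exact hmono i m hm1 hm2
  have hnn : ∀ m ∈ Finset.Ico i n, 0 ≤ ε m := fun m hm =>
    (hpos m (Finset.mem_Ico.mp hm).2).le
  have hsum1 : ∑ m ∈ Finset.Ico i n, (ε m) ^ 2
      ≤ K * ε i * ∑ m ∈ Finset.Ico i n, ε m := by
    rw [Finset.mul_sum]
    apply Finset.sum_le_sum
    intro m hm
    have := hub m hm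
    have := hnn m hm
    nlinarith
  have hsum2 : ((n - i : ℕ) : ℝ) * ε i ≤ ∑ m ∈ Finset.Ico i n, ε m := by
    have := Finset.card_nsmul_le_sum (Finset.Ico i n) ε (ε i) hlb
    rwa [Nat.card_Ico, nsmul_eq_mul] at this
  have hsumpos : 0 ≤ ∑ m ∈ Finset.Ico i n, ε m :=
    Finset.sum_nonneg hnn
  have hsq : 0 ≤ ∑ m ∈ Finset.Ico i n, (ε m) ^ 2 :=
    Finset.sum_nonneg fun m _ => sq_nonneg _
  have hni : (0:ℝ) ≤ ((n - i : ℕ) : ℝ) := Nat.cast_nonneg _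
  calc ((n - i : ℕ) : ℝ) * ∑ m ∈ Finset.Ico i n, (ε m) ^ 2
      ≤ ((n - i : ℕ) : ℝ) * (K * ε i * ∑ m ∈ Finset.Ico i n, ε m) :=
        mul_le_mul_of_nonneg_left hsum1 hni
    _ = K * ((((n - i : ℕ) : ℝ) * ε i) * ∑ m ∈ Finset.Ico i n, ε m) := by ring
    _ ≤ K * ((∑ m ∈ Finset.Ico i n, ε m) * ∑ m ∈ Finset.Ico i n, ε m) := by
        apply mul_le_mul_of_nonneg_left _ (by linarith)
        exact mul_le_mul_of_nonneg_right hsum2 hsumpos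
    _ = K * (∑ m ∈ Finset.Ico i n, ε m) ^ 2 := by ring
    _ ≤ K ^ 2 * (∑ m ∈ Finset.Ico i n, ε m) ^ 2 := by
        have hKK : K ≤ K ^ 2 := by nlinarith
        have := sq_nonneg (∑ m ∈ Finset.Ico i n, ε m)
        nlinarith
end

section
/- Let ε₁ ≤ … ≤ εₙ be positive reals such that ε_j ≤ ε_m + 8/(Σ_{l=1}^m ε_l) for all 1 ≤ m < j ≤ n. Suppose for some index i with 1 ≤ i < n we have εᵢ · (Σ_{m=1}^i ε_m) ≤ 1 and 2 ε_{i+1} · (Σ_{m=1}^{i+1} ε_m) > 1. Then 42² (Σ_{m=i+1}^n ε_m)² ≥ (n−i) · Σ_{m=i+1}^n ε_m². -/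
/-- Lemma bigbig: Let `ε` be nondecreasing positive (0-indexed, length `n`)
with `ε j ≤ ε m + 8 / (∑_{l ≤ m} ε l)` for all `m < j < n`. If for some index `p` with
`p + 1 < n` we have `ε p * (∑_{m ≤ p} ε m) ≤ 1` and `2 * ε (p+1) * (∑_{m ≤ p+1} ε m) > 1`,
then `42² * (∑_{m=p+1}^{n-1} ε m)² ≥ (n - (p+1)) * ∑_{m=p+1}^{n-1} ε m ^ 2`. -/
theorem bigbig (n : ℕ) (ε : ℕ → ℝ)
    (hpos : ∀ i < n, 0 < ε i)
    (hmono : ∀ i j : ℕ, i ≤ j → j < n → ε i ≤ ε j)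
    (hgap : ∀ m j : ℕ, m < j → j < n →
      ε j ≤ ε m + 8 / (∑ l ∈ Finset.range (m + 1), ε l))
    (p : ℕ) (hp : p + 1 < n)
    (hsmall : ε p * (∑ m ∈ Finset.range (p + 1), ε m) ≤ 1)
    (hbig : 1 < 2 * ε (p + 1) * (∑ m ∈ Finset.range (p + 2), ε m)) :
    ((n - (p + 1) : ℕ) : ℝ) * (∑ m ∈ Finset.Ico (p + 1) n, (ε m) ^ 2)
      ≤ 42 ^ 2 * (∑ m ∈ Finset.Ico (p + 1) n, ε m) ^ 2 := by
  set A := ∑ m ∈ Finset.Ico (p + 1) n, ε m with hA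
  set B := ∑ m ∈ Finset.Ico (p + 1) n, (ε m) ^ 2 with hBdef
  have hε1 : 0 < ε (p + 1) := hpos _ hp
  have hS : 0 < ∑ l ∈ Finset.range (p + 2), ε l :=
    Finset.sum_pos (fun i hi => hpos i (lt_of_lt_of_le (Finset.mem_range.mp hi) hp))
      ⟨0, Finset.mem_range.mpr (by omega)⟩
  have hlast : ε (n - 1) ≤ 17 * ε (p + 1) := by
    rcases eq_or_lt_of_le (show p + 1 ≤ n - 1 by omega) with h | h
    · rw [← h]; nlinarith
    · have hg := hgap (p + 1) (n - 1) h (by omega)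
      have hdiv : 8 / (∑ l ∈ Finset.range (p + 1 + 1), ε l) ≤ 16 * ε (p + 1) := by
        rw [div_le_iff₀ (by simpa using hS)]
        nlinarith
      linarith
  have hB : B ≤ ε (n - 1) * A := by
    rw [hBdef, hA, Finset.mul_sum]
    refine Finset.sum_le_sum fun m hm => ?_
    obtain ⟨hm1, hm2⟩ := Finset.mem_Ico.mp hm
    have := hmono m (n - 1) (by omega) (by omega)
    nlinarith [hpos m hm2]
  have hAk : ((n - (p + 1) : ℕ) : ℝ) * ε (p + 1) ≤ A := by
    have := Finset.card_nsmul_le_sum (Finset.Ico (p + 1) n) ε (ε (p + 1))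
      (fun m hm => hmono (p + 1) m (Finset.mem_Ico.mp hm).1 (Finset.mem_Ico.mp hm).2)
    rwa [Nat.card_Ico, nsmul_eq_mul] at this
  have hA0 : 0 ≤ A := by
    rw [hA]
    exact Finset.sum_nonneg fun m hm => (hpos m (Finset.mem_Ico.mp hm).2).le
  have hB0 : 0 ≤ B := by
    rw [hBdef]
    exact Finset.sum_nonneg fun m _ => sq_nonneg _
  have hk0 : (0:ℝ) ≤ ((n - (p + 1) : ℕ) : ℝ) := Nat.cast_nonneg _
  nlinarith [mul_le_mul_of_nonneg_left hB hk0, mul_le_mul_of_nonneg_right hlast hA0,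
    mul_le_mul_of_nonneg_right hAk hA0]
end

section
/- Let ε₁ ≤ … ≤ εₙ be positive reals such that ε_j ≤ ε_m + 8/(Σ_{l=1}^m ε_l) for all 1 ≤ m < j ≤ n. Suppose for some index p with 1 ≤ p < n we have ε_p · (Σ_{m=1}^p ε_m) ≤ 1 and 2 ε_{p+1} · (Σ_{m=1}^{p+1} ε_m) > 1. Then 42² (Σ_{m=1}^n ε_m)² ≥ (Σ_{m=1}^n ε_m²) · ( n − p + (Σ_{m=1}^p ε_m)² ). -/
set_option maxHeartbeats 1600000 in
/-- Lemma main: Let `ε` be nondecreasing positive (0-indexed, length `n`)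
with `ε j ≤ ε m + 8 / (∑_{l ≤ m} ε l)` for all `m < j < n`. If for some index `p` with
`p + 1 < n` we have `ε p * (∑_{m ≤ p} ε m) ≤ 1` and `2 * ε (p+1) * (∑_{m ≤ p+1} ε m) > 1`,
then `42² * (∑_{m<n} ε m)² ≥ (∑_{m<n} ε m ^ 2) * (n - (p+1) + (∑_{m ≤ p} ε m)²)`. -/
theorem main_lemma (n : ℕ) (ε : ℕ → ℝ)
    (hpos : ∀ i < n, 0 < ε i)
    (hmono : ∀ i j : ℕ, i ≤ j → j < n → ε i ≤ ε j)
    (hgap : ∀ m j : ℕ, m < j → j < n →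
      ε j ≤ ε m + 8 / (∑ l ∈ Finset.range (m + 1), ε l))
    (p : ℕ) (hp : p + 1 < n)
    (hsmall : ε p * (∑ m ∈ Finset.range (p + 1), ε m) ≤ 1)
    (hbig : 1 < 2 * ε (p + 1) * (∑ m ∈ Finset.range (p + 2), ε m)) :
    (∑ m ∈ Finset.range n, (ε m) ^ 2)
        * (((n - (p + 1) : ℕ) : ℝ) + (∑ m ∈ Finset.range (p + 1), ε m) ^ 2)
      ≤ 42 ^ 2 * (∑ m ∈ Finset.range n, ε m) ^ 2 := by
  set σ : ℝ := ∑ m ∈ Finset.range (p + 1), ε m with hσ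
  set σ' : ℝ := ∑ m ∈ Finset.range (p + 2), ε m with hσ'
  set S : ℝ := ∑ m ∈ Finset.range n, ε m with hS
  set Q : ℝ := ∑ m ∈ Finset.range n, (ε m) ^ 2 with hQ
  set T : ℝ := ∑ m ∈ Finset.Ico (p + 1) n, ε m with hT
  set Qp : ℝ := ∑ m ∈ Finset.range (p + 1), (ε m) ^ 2 with hQpdef
  set Qt : ℝ := ∑ m ∈ Finset.Ico (p + 1) n, (ε m) ^ 2 with hQtdef
  set N : ℝ := ((n - (p + 1) : ℕ) : ℝ) with hNdef
  have hεp1 : 0 < ε (p + 1) := hpos _ hp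
  have hεp : 0 < ε p := hpos _ (by omega)
  have hσpos : 0 < σ := by
    rw [hσ]
    exact Finset.sum_pos (fun i hi => hpos i (by have := Finset.mem_range.1 hi; omega))
      ⟨0, by simp⟩
  have hσ'pos : 0 < σ' := by
    rw [hσ']
    exact Finset.sum_pos (fun i hi => hpos i (by have := Finset.mem_range.1 hi; omega))
      ⟨0, by simp⟩
  have hsplit : σ + T = S := Finset.sum_range_add_sum_Ico ε (by omega)
  have hsplitQ : Qp + Qt = Q := Finset.sum_range_add_sum_Ico (fun m => (ε m) ^ 2) (by omega)
  have hTpos : 0 < T := by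
    rw [hT]
    exact Finset.sum_pos (fun i hi => hpos i (Finset.mem_Ico.1 hi).2)
      ⟨p + 1, Finset.mem_Ico.2 ⟨le_refl _, hp⟩⟩
  have hσ'eq : σ' = σ + ε (p + 1) := Finset.sum_range_succ ε (p + 1)
  have hσσ' : σ ≤ σ' := by linarith
  have hσ'S : σ' ≤ S := by
    rw [hσ', hS]
    apply Finset.sum_le_sum_of_subset_of_nonneg (Finset.range_subset_range.2 (by omega))
    intro i hi _
    exact (hpos i (Finset.mem_range.1 hi)).le
  have hσS : σ ≤ S := le_trans hσσ' hσ'S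
  have hTS : T ≤ S := by linarith
  have hNnn : 0 ≤ N := Nat.cast_nonneg _
  -- gap from p to p+1
  have hgap1 : ε (p + 1) ≤ ε p + 8 / σ := by
    rw [hσ]; exact hgap p (p + 1) (by omega) hp
  have h9 : ε (p + 1) * σ ≤ 9 := by
    have h8 : (8 : ℝ) / σ * σ = 8 := div_mul_cancel₀ 8 (ne_of_gt hσpos)
    nlinarith [hgap1, hσpos, hsmall]
  -- all tail terms are at most 17 ε (p+1)
  have h17 : ∀ m, p + 1 ≤ m → m < n → ε m ≤ 17 * ε (p + 1) := by
    intro m hm hmn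
    rcases eq_or_lt_of_le hm with h | h
    · rw [← h]; linarith
    · have h1 : ε m ≤ ε (p + 1) + 8 / σ' := by
        have := hgap (p + 1) m h hmn
        rw [show p + 1 + 1 = p + 2 from rfl] at this
        rw [hσ']; exact this
      have h2 : 8 / σ' ≤ 16 * ε (p + 1) := by
        rw [div_le_iff₀ hσ'pos]
        nlinarith [hbig]
      linarith
  have hQp1 : Qp ≤ 1 := by
    have h1 : Qp ≤ ∑ m ∈ Finset.range (p + 1), ε p * ε m := by
      rw [hQpdef]
      apply Finset.sum_le_sum
      intro i hi
      have hip : i ≤ p := by have := Finset.mem_range.1 hi; omega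
      have h2 := hmono i p hip (by omega)
      have h3 := hpos i (by have := Finset.mem_range.1 hi; omega)
      nlinarith
    rw [← Finset.mul_sum] at h1
    calc Qp ≤ ε p * σ := h1
      _ ≤ 1 := hsmall
  have hQpnn : 0 ≤ Qp := by
    rw [hQpdef]; exact Finset.sum_nonneg fun i _ => sq_nonneg _
  have hQt17 : Qt ≤ 17 * ε (p + 1) * T := by
    have h1 : Qt ≤ ∑ m ∈ Finset.Ico (p + 1) n, 17 * ε (p + 1) * ε m := by
      rw [hQtdef]
      apply Finset.sum_le_sum
      intro i hi
      obtain ⟨h2, h3⟩ := Finset.mem_Ico.1 hi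
      have h4 := h17 i h2 h3
      have h5 := hpos i h3
      nlinarith
    rw [← Finset.mul_sum] at h1
    exact h1
  have hQtnn : 0 ≤ Qt := by
    rw [hQtdef]; exact Finset.sum_nonneg fun i _ => sq_nonneg _
  have hNε : N * ε (p + 1) ≤ T := by
    have h1 : ∑ m ∈ Finset.Ico (p + 1) n, ε (p + 1) ≤ T := by
      rw [hT]
      exact Finset.sum_le_sum fun i hi =>
        hmono (p + 1) i (Finset.mem_Ico.1 hi).1 (Finset.mem_Ico.1 hi).2
    rw [Finset.sum_const, Nat.card_Ico, nsmul_eq_mul] at h1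
    exact h1
  have hbig' : (1 : ℝ) ≤ 2 * ε (p + 1) * σ' := hbig.le
  clear_value σ σ' S Q T Qp Qt N
  clear hσ hσ' hS hQ hT hQpdef hQtdef hNdef hpos hmono hgap hsmall hbig h17 hgap1
  -- N ≤ 2 S T
  have hN2ST : N ≤ 2 * S * T := by
    have h1 : N * 1 ≤ N * (2 * ε (p + 1) * σ') := mul_le_mul_of_nonneg_left hbig' hNnn
    have h2 : N * (2 * ε (p + 1) * σ') = 2 * σ' * (N * ε (p + 1)) := by ring
    have h3 : 2 * σ' * (N * ε (p + 1)) ≤ 2 * σ' * T :=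
      mul_le_mul_of_nonneg_left hNε (by linarith)
    have h4 : 2 * σ' * T ≤ 2 * S * T :=
      mul_le_mul_of_nonneg_right (by linarith) hTpos.le
    linarith
  have hSS : σ ^ 2 ≤ S * S := by
    have h1 : σ * σ ≤ S * S := mul_le_mul hσS hσS hσpos.le (by linarith)
    have h2 : σ ^ 2 = σ * σ := sq σ
    linarith
  have hTσ : T * σ ≤ S * S :=
    mul_le_mul hTS hσS hσpos.le (by linarith)
  have hSnn0 : (0:ℝ) ≤ S := by linarith
  have hST2 : 2 * S * T ≤ 2 * S * S := mul_le_mul_of_nonneg_left hTS (by linarith)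
  have hA : Qp * N ≤ 2 * S * S := by
    have h1 : Qp * N ≤ 1 * N := mul_le_mul_of_nonneg_right hQp1 hNnn
    linarith
  have hB : Qp * σ ^ 2 ≤ S * S := by
    have h1 : Qp * σ ^ 2 ≤ 1 * σ ^ 2 := mul_le_mul_of_nonneg_right hQp1 (sq_nonneg σ)
    linarith
  have hC : Qt * N ≤ 17 * (S * S) := by
    have h1 : Qt * N ≤ 17 * ε (p + 1) * T * N := mul_le_mul_of_nonneg_right hQt17 hNnn
    have h2 : 17 * T * (N * ε (p + 1)) ≤ 17 * T * T :=
      mul_le_mul_of_nonneg_left hNε (by linarith)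
    have h3 : T * T ≤ S * S := mul_le_mul hTS hTS hTpos.le (by linarith)
    have h4 : 17 * ε (p + 1) * T * N = 17 * T * (N * ε (p + 1)) := by ring
    linarith
  have hD : Qt * σ ^ 2 ≤ 153 * (S * S) := by
    have h1 : Qt * σ ^ 2 ≤ 17 * ε (p + 1) * T * σ ^ 2 :=
      mul_le_mul_of_nonneg_right hQt17 (sq_nonneg σ)
    have h2 : 17 * (ε (p + 1) * σ) * (T * σ) ≤ 17 * 9 * (T * σ) := by
      have : 0 ≤ T * σ := mul_nonneg hTpos.le hσpos.le
      have h9' := mul_le_mul_of_nonneg_right h9 this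
      linarith
    have h3 : 17 * 9 * (T * σ) ≤ 153 * (S * S) := by linarith
    have h4 : 17 * ε (p + 1) * T * σ ^ 2 = 17 * (ε (p + 1) * σ) * (T * σ) := by ring
    linarith
  have hQeq : Q * (N + σ ^ 2) = Qp * N + Qp * σ ^ 2 + Qt * N + Qt * σ ^ 2 := by
    rw [← hsplitQ]; ring
  rw [hQeq]
  have hSnn : 0 ≤ S * S := mul_self_nonneg S
  have : (42 : ℝ) ^ 2 * S ^ 2 = 1764 * (S * S) := by ring
  rw [this]
  linarith
end

section
/- Let ε₁ ≤ … ≤ εₙ be positive reals satisfying the unsaturated condition ε_k · (Σ_{i=1}^{k−1} εᵢ) ≤ Σ_{i=1}^{k−1} εᵢ² + 8 for all 2 ≤ k ≤ n. Then (Σᵢ εᵢ² + 8)/(4 (Σᵢ εᵢ)²) ≤ 443 · H(ε), where H(ε) = max_{0 ≤ i ≤ n} 1/((Σ_{j=1}^i ε_j)² + n − i). -/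
/-!
Write `S = ∑ εᵢ`, `a = ε_{n-1} = max εᵢ`, so that `∑ εᵢ² ≤ a S`. If `a S ≤ 1764`, the term `i = n`
of `H`, namely `1 / S²`, already gives the bound, with `443 = (1764 + 8) / 4`. Otherwise cut at the
first index `m` with `ε_m ≥ a / 2` and let `σ = ∑_{j<m} εⱼ`. Each `j < m` contributes at least
`εⱼ · a / 2` to `∑_{j<n-1} εⱼ (a - εⱼ)`, which the unsaturated condition at `k = n - 1` bounds by `8`;
hence `a σ ≤ 16`. The `n - m` entries from `m` on are at least `a / 2`, so `(n - m) a ≤ 2 S`. Since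
`a S` is large, both `σ²` and `n - m` are small against `S²`, and the term `i = m` of `H` wins.
-/

open Finset

section PrefixSums

variable {f : ℕ → ℝ}

lemma sum_sq_le_mul_sum {n : ℕ} {a : ℝ} (hnn : ∀ j < n, 0 ≤ f j) (hle : ∀ j < n, f j ≤ a) :
    ∑ j ∈ range n, f j ^ 2 ≤ a * ∑ j ∈ range n, f j := by
  rw [mul_sum]
  refine sum_le_sum fun j hj => ?_
  have hj := mem_range.mp hj
  nlinarith [hnn j hj, hle j hj]

lemma mul_sum_le_sum_mul_sub {m k : ℕ} {b t : ℝ} (hmk : m ≤ k) (hnn : ∀ j < k, 0 ≤ f j)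
    (hle : ∀ j < k, f j ≤ b) (hlt : ∀ j < m, f j ≤ t) :
    (b - t) * ∑ j ∈ range m, f j ≤ ∑ j ∈ range k, f j * (b - f j) := by
  calc (b - t) * ∑ j ∈ range m, f j
      ≤ ∑ j ∈ range m, f j * (b - f j) := by
        rw [mul_sum]
        refine sum_le_sum fun j hj => ?_
        have hj := mem_range.mp hj
        nlinarith [hnn j (by omega), hlt j hj]
    _ ≤ ∑ j ∈ range k, f j * (b - f j) :=
        sum_le_sum_of_subset_of_nonneg (range_mono hmk) fun j hj _ =>
          have hj := mem_range.mp hj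
          mul_nonneg (hnn j hj) (sub_nonneg.mpr (hle j hj))

lemma card_mul_le_sum {m n : ℕ} {t : ℝ} (hmn : m ≤ n) (hnn : ∀ j < n, 0 ≤ f j)
    (hge : ∀ j, m ≤ j → j < n → t ≤ f j) :
    ((n - m : ℕ) : ℝ) * t ≤ ∑ j ∈ range n, f j := by
  rw [← sum_range_add_sum_Ico f hmn]
  have head : 0 ≤ ∑ j ∈ range m, f j :=
    sum_nonneg fun j hj => hnn j (by have := mem_range.mp hj; omega)
  have tail : ((n - m : ℕ) : ℝ) * t ≤ ∑ j ∈ Ico m n, f j := by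
    simpa [nsmul_eq_mul] using
      card_nsmul_le_sum (Ico m n) f t fun j hj => hge j (mem_Ico.mp hj).1 (mem_Ico.mp hj).2
  linarith

lemma exists_first_ge_of_monotoneOn {n : ℕ} {t : ℝ} (hmono : ∀ i j, i ≤ j → j < n → f i ≤ f j)
    (h : ∃ j < n, t ≤ f j) :
    ∃ m < n, (∀ j < m, f j < t) ∧ ∀ j, m ≤ j → j < n → t ≤ f j := by
  classical
  obtain ⟨hmn, hm⟩ := Nat.find_spec h
  refine ⟨Nat.find h, hmn, fun j hj => ?_, fun j hj hjn => hm.trans (hmono _ j hj hjn)⟩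
  by_contra! hge
  exact Nat.find_min h hj ⟨by omega, hge⟩

lemma sum_mul_sub_le_of_unsaturated {n k : ℕ} (hk : k < n)
    (hunsat : ∀ k : ℕ, 1 ≤ k → k < n →
      f k * (∑ i ∈ range k, f i) ≤ (∑ i ∈ range k, (f i) ^ 2) + 8) :
    ∑ j ∈ range k, f j * (f k - f j) ≤ 8 := by
  rcases Nat.eq_zero_or_pos k with rfl | hk1
  · simp
  · have := hunsat k hk1 hk
    simp only [mul_sub, sum_sub_distrib, ← sum_mul, ← sq]
    linarith

end PrefixSums

lemma div_le_of_prefix_bounds {S Q σ k t : ℝ} (hS : 0 < S) (hσ : 0 ≤ σ) (hk : 1 ≤ k)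
    (hQ : Q ≤ 2 * t * S) (hbig : 882 < t * S) (hσt : t * σ ≤ 8) (hkt : k * t ≤ S) :
    (Q + 8) / (4 * S ^ 2) ≤ 443 * (1 / (σ ^ 2 + k)) := by
  have hσS : 882 * σ ≤ 8 * S := by nlinarith [mul_le_mul_of_nonneg_right hbig.le hσ]
  have hkS : 882 * k ≤ S ^ 2 := by nlinarith
  rw [mul_one_div, div_le_div_iff₀ (by positivity) (by positivity)]
  nlinarith [mul_le_mul_of_nonneg_left hσt (mul_nonneg hS.le hσ)]

/-- unsaturated regime: Under the unsaturated condition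
`ε k * (∑_{i<k} ε i) ≤ (∑_{i<k} ε i ^ 2) + 8` for all `1 ≤ k < n` (0-indexed),
`f(ε) = ((∑_{i<n} ε i ^ 2) + 8) / (4 (∑_{i<n} ε i)²) ≤ 443 * H(ε)` where
`H(ε) = max_{0 ≤ i ≤ n} 1 / ((∑_{j<i} ε j)² + (n - i))`. -/
theorem unsaturated_regime (n : ℕ) (hn : 1 ≤ n) (ε : ℕ → ℝ)
    (hpos : ∀ i < n, 0 < ε i)
    (hmono : ∀ i j : ℕ, i ≤ j → j < n → ε i ≤ ε j)
    (hunsat : ∀ k : ℕ, 1 ≤ k → k < n →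
      ε k * (∑ i ∈ Finset.range k, ε i) ≤ (∑ i ∈ Finset.range k, (ε i) ^ 2) + 8) :
    ((∑ i ∈ Finset.range n, (ε i) ^ 2) + 8) / (4 * (∑ i ∈ Finset.range n, ε i) ^ 2)
      ≤ 443 * (Finset.range (n + 1)).sup' Finset.nonempty_range_add_one
          (fun i => 1 / ((∑ j ∈ Finset.range i, ε j) ^ 2 + ((n - i : ℕ) : ℝ))) := by
  set S := ∑ i ∈ range n, ε i
  set a := ε (n - 1)
  have hnn : ∀ j < n, 0 ≤ ε j := fun j hj => (hpos j hj).le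
  have hle : ∀ j < n, ε j ≤ a := fun j hj => hmono j (n - 1) (by omega) (by omega)
  have hS : 0 < S := sum_pos (fun j hj => hpos j (mem_range.mp hj)) ⟨0, mem_range.mpr hn⟩
  have hQ := sum_sq_le_mul_sum hnn hle
  suffices ∃ i ∈ range (n + 1), ((∑ i ∈ range n, ε i ^ 2) + 8) / (4 * S ^ 2)
      ≤ 443 * (1 / ((∑ j ∈ range i, ε j) ^ 2 + ((n - i : ℕ) : ℝ))) by
    obtain ⟨i, hi, h⟩ := this
    refine h.trans ?_
    gcongr
    exact le_sup' (fun i => 1 / ((∑ j ∈ range i, ε j) ^ 2 + ((n - i : ℕ) : ℝ))) hi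
  by_cases hsmall : a * S ≤ 1764
  · refine ⟨n, self_mem_range_succ n, ?_⟩
    rw [Nat.sub_self, Nat.cast_zero, add_zero, mul_one_div,
      div_le_div_iff₀ (by positivity) (by positivity)]
    nlinarith
  obtain ⟨m, hmn, hbelow, habove⟩ :=
    exists_first_ge_of_monotoneOn (t := a / 2) hmono
      ⟨n - 1, by omega, half_le_self (hnn _ (by omega))⟩
  have hgap := sum_mul_sub_le_of_unsaturated (by omega : n - 1 < n) hunsat
  have hcut := mul_sum_le_sum_mul_sub (by omega : m ≤ n - 1) (fun j hj => hnn j (by omega))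
    (fun j hj => hle j (by omega)) (fun j hj => (hbelow j hj).le)
  rw [sub_half] at hcut
  refine ⟨m, mem_range.mpr (by omega), div_le_of_prefix_bounds hS
    (sum_nonneg fun j hj => hnn j (by have := mem_range.mp hj; omega))
    (by exact_mod_cast Nat.sub_pos_of_lt hmn) (by linarith) (by linarith) (by linarith)
    (card_mul_le_sum hmn.le hnn habove)⟩
end

section
/- Let ε₁ ≤ … ≤ ε_{k+1} be positive reals and define r₁ = ε₁ and r_{m+1} = min{ε_{m+1}, (Σ_{i=1}^m rᵢ² + 8)/(Σ_{i=1}^m rᵢ)} for 1 ≤ m ≤ k. Write f(r₁ᵐ) = (Σ_{i=1}^m rᵢ² + 8)/(4 (Σ_{i=1}^m rᵢ)²) and H(ε₁ᵐ) = max_{0 ≤ i ≤ m} 1/((Σ_{j=1}^i ε_j)² + m − i). If saturation occurs at index k+1, i.e. r_{k+1} = (Σ_{i=1}^k rᵢ² + 8)/(Σ_{i=1}^k rᵢ), and H(ε₁ᵏ) ≥ f(r₁ᵏ)/443, then H(ε₁^{k+1}) ≥ f(r₁^{k+1})/443. -/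
/-!
Write `S = ∑_{i<k} rᵢ` and `P = ∑_{i<k} rᵢ² + 8`, so that `f(r₁ᵏ) = P / (4S²)`. Saturation means
`r_{k+1} = P / S`, and then `f(r₁^{k+1}) = (P + P²/S²) / (4 (S + P/S)²) = P / (4 (S² + P))`.
If `H(ε₁ᵏ) = 1/a` is attained at the index `i₀`, the same index gives the term `1/(a + 1)` of
`H(ε₁^{k+1})`, and `P a ≤ 1772 S²` implies `P (a + 1) ≤ 1772 (S² + P)`.
-/

open Finset

lemma saturated_weights_pos (k : ℕ) (ε r : ℕ → ℝ) (hpos : ∀ i ≤ k, 0 < ε i)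
    (hr0 : r 0 = ε 0)
    (hrec : ∀ m : ℕ, m + 1 ≤ k → r (m + 1) = min (ε (m + 1))
      (((∑ i ∈ range (m + 1), (r i) ^ 2) + 8) / (∑ i ∈ range (m + 1), r i))) :
    ∀ i ≤ k, 0 < r i := by
  intro i
  induction i using Nat.strong_induction_on with
  | _ i ih =>
    intro hi
    match i with
    | 0 => exact hr0 ▸ hpos 0 hi
    | m + 1 =>
      have hS : 0 < ∑ j ∈ range (m + 1), r j :=
        sum_pos (fun j hj => ih j (mem_range.1 hj) (by grind)) nonempty_range_add_one
      have hQ : 0 ≤ ∑ j ∈ range (m + 1), r j ^ 2 := sum_nonneg fun j _ => sq_nonneg _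
      rw [hrec m hi]
      exact lt_min (hpos _ hi) (div_pos (by linarith) hS)

lemma ratio_append_saturated {Q S : ℝ} (hS : S ≠ 0) (hQ : 0 ≤ Q) :
    (Q + ((Q + 8) / S) ^ 2 + 8) / (4 * (S + (Q + 8) / S) ^ 2)
      = (Q + 8) / (4 * (S ^ 2 + (Q + 8))) := by
  have : S ^ 2 + (Q + 8) ≠ 0 := by positivity
  field_simp
  ring

lemma ratio_le_inv_succ_of_le_inv {P S a : ℝ} (hP : 0 < P) (hS : S ≠ 0) (ha : 0 ≤ a)
    (h : P / (4 * S ^ 2) / 443 ≤ 1 / a) :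
    P / (4 * (S ^ 2 + P)) / 443 ≤ 1 / (a + 1) := by
  have hS2 : 0 < S ^ 2 := by positivity
  rw [div_div, div_le_div_iff₀ (by positivity) (by linarith)]
  rcases ha.eq_or_lt with rfl | ha
  · nlinarith
  · rw [div_div, div_le_div_iff₀ (by positivity) ha] at h
    nlinarith

theorem saturated_step_general (k : ℕ) (hk : 1 ≤ k) (ε r : ℕ → ℝ)
    (hpos : ∀ i ≤ k, 0 < ε i)
    (hr0 : r 0 = ε 0)
    (hrec : ∀ m : ℕ, m + 1 ≤ k → r (m + 1) = min (ε (m + 1))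
      (((∑ i ∈ Finset.range (m + 1), (r i) ^ 2) + 8) / (∑ i ∈ Finset.range (m + 1), r i)))
    (hsat : r k = ((∑ i ∈ Finset.range k, (r i) ^ 2) + 8) / (∑ i ∈ Finset.range k, r i))
    (hH : (((∑ i ∈ Finset.range k, (r i) ^ 2) + 8)
            / (4 * (∑ i ∈ Finset.range k, r i) ^ 2)) / 443
          ≤ (Finset.range (k + 1)).sup' Finset.nonempty_range_add_one
              (fun i => 1 / ((∑ j ∈ Finset.range i, ε j) ^ 2 + ((k - i : ℕ) : ℝ)))) :
    (((∑ i ∈ Finset.range (k + 1), (r i) ^ 2) + 8)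
        / (4 * (∑ i ∈ Finset.range (k + 1), r i) ^ 2)) / 443
      ≤ (Finset.range (k + 2)).sup' Finset.nonempty_range_add_one
          (fun i => 1 / ((∑ j ∈ Finset.range i, ε j) ^ 2 + ((k + 1 - i : ℕ) : ℝ))) := by
  have hrpos := saturated_weights_pos k ε r hpos hr0 hrec
  have hS : 0 < ∑ i ∈ range k, r i :=
    sum_pos (fun i hi => hrpos i (mem_range.1 hi).le) (nonempty_range_iff.2 (by omega))
  have hQ : 0 ≤ ∑ i ∈ range k, r i ^ 2 := sum_nonneg fun i _ => sq_nonneg _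
  obtain ⟨i₀, hi₀, hmax⟩ := exists_mem_eq_sup' nonempty_range_add_one
    (fun i => 1 / ((∑ j ∈ range i, ε j) ^ 2 + ((k - i : ℕ) : ℝ)))
  rw [hmax] at hH
  have hstep := ratio_le_inv_succ_of_le_inv (by positivity) hS.ne' (by positivity) hH
  rw [sum_range_succ, sum_range_succ, hsat, ratio_append_saturated hS.ne' hQ]
  refine hstep.trans (le_trans ?_ (le_sup' _ (mem_range.2 (by grind : i₀ < k + 2))))
  have hi₀k : k + 1 - i₀ = k - i₀ + 1 := by grind
  simp only [hi₀k, Nat.cast_add, Nat.cast_one, add_assoc, le_refl]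

/-- Lemma rec: With `ε` nondecreasing positive on indices `0..k` and the
ADPM weights `r` (0-indexed), if saturation occurs at (0-indexed) index `k`, i.e.
`r k = ((∑_{i<k} r i ^ 2) + 8) / (∑_{i<k} r i)`, and `H(ε₁ᵏ) ≥ f(r₁ᵏ)/443`, then
`H(ε₁^{k+1}) ≥ f(r₁^{k+1})/443`, where `f(r₁ᵐ) = ((∑_{i<m} r i²) + 8)/(4 (∑_{i<m} r i)²)`
and `H(ε₁ᵐ) = max_{0 ≤ i ≤ m} 1/((∑_{j<i} ε j)² + (m - i))`. -/
theorem saturated_step (k : ℕ) (hk : 1 ≤ k) (ε r : ℕ → ℝ)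
    (hpos : ∀ i ≤ k, 0 < ε i)
    (hmono : ∀ i j : ℕ, i ≤ j → j ≤ k → ε i ≤ ε j)
    (hr0 : r 0 = ε 0)
    (hrec : ∀ m : ℕ, m + 1 ≤ k → r (m + 1) = min (ε (m + 1))
      (((∑ i ∈ Finset.range (m + 1), (r i) ^ 2) + 8) / (∑ i ∈ Finset.range (m + 1), r i)))
    (hsat : r k = ((∑ i ∈ Finset.range k, (r i) ^ 2) + 8) / (∑ i ∈ Finset.range k, r i))
    (hH : (((∑ i ∈ Finset.range k, (r i) ^ 2) + 8)
            / (4 * (∑ i ∈ Finset.range k, r i) ^ 2)) / 443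
          ≤ (Finset.range (k + 1)).sup' Finset.nonempty_range_add_one
              (fun i => 1 / ((∑ j ∈ Finset.range i, ε j) ^ 2 + ((k - i : ℕ) : ℝ)))) :
    (((∑ i ∈ Finset.range (k + 1), (r i) ^ 2) + 8)
        / (4 * (∑ i ∈ Finset.range (k + 1), r i) ^ 2)) / 443
      ≤ (Finset.range (k + 2)).sup' Finset.nonempty_range_add_one
          (fun i => 1 / ((∑ j ∈ Finset.range i, ε j) ^ 2 + ((k + 1 - i : ℕ) : ℝ))) :=
  saturated_step_general k hk ε r hpos hr0 hrec hsat hH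
end

section
/- For every n ≥ 1 and all positive reals ε₁ ≤ … ≤ εₙ, with r defined by r₁ = ε₁ and r_{k+1} = min{ε_{k+1}, (Σ_{i=1}^k rᵢ² + 8)/(Σ_{i=1}^k rᵢ)}, it holds that (Σᵢ rᵢ² + 8)/(4 (Σᵢ rᵢ)²) ≤ 443 · max_{0 ≤ i ≤ n} 1/((Σ_{j=1}^i ε_j)² + n − i). -/
/-!
Write `ρ k = (∑_{i<k} r i ^ 2 + 8) / ∑_{i<k} r i` and `E i = ∑_{j<i} ε j`. Since `r k ≤ ρ k`,
appending `r k` cannot raise the ratio, so `ρ` is nonincreasing and `c = ρ n` is the smallest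
ratio; the loss is `c / (4 ∑ r)` and `r k ≥ min (ε k) c`. If `m` counts the `ε k ≤ c`, then `r`
agrees with `ε` below `m`, so `∑ r ≥ E m + (n - m) c` and `c E i ≤ ∑_{j<i} ε j ^ 2 + 8` for
`1 ≤ i ≤ m`.

Let `t ≤ m` be the first index with `8 ≤ ε t E (t + 1)` (or `t = m`). Before `t` the `8` dominates,
giving `c E t < 16`, hence `c E t ^ 2 ≤ 16 E m`; from `t` on it is dominated, giving
`c ≤ 2 ε t`, hence `c (m - t) ≤ 2 (E m - E t)`. Thus `c (E t ^ 2 + n - t) ≤ 18 ∑ r`: the loss is at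
most `9 / 2` times the `t`-th term of `H`.
-/

open Finset

noncomputable def adpmRatio (r : ℕ → ℝ) (k : ℕ) : ℝ :=
  ((∑ i ∈ range k, r i ^ 2) + 8) / ∑ i ∈ range k, r i

structure IsAdpmWeights (n : ℕ) (ε r : ℕ → ℝ) : Prop where
  zero : r 0 = ε 0
  succ : ∀ k, k + 1 < n → r (k + 1) = min (ε (k + 1)) (adpmRatio r (k + 1))

lemma sum_sq_le_mul_sum_s15 {ι : Type*} {s : Finset ι} {f : ι → ℝ} {a : ℝ}
    (hf₀ : ∀ i ∈ s, 0 ≤ f i) (hfa : ∀ i ∈ s, f i ≤ a) :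
    ∑ i ∈ s, f i ^ 2 ≤ a * ∑ i ∈ s, f i := by
  rw [mul_sum]
  refine sum_le_sum fun i hi => ?_
  rw [sq]
  exact mul_le_mul_of_nonneg_right (hfa i hi) (hf₀ i hi)

lemma add_sq_div_add_le_div {Q S x : ℝ} (hS : 0 < S) (hx : 0 ≤ x) (hxQ : x ≤ Q / S) :
    (Q + x ^ 2) / (S + x) ≤ Q / S := by
  rw [le_div_iff₀ hS] at hxQ
  rw [div_le_div_iff₀ (by positivity) hS]
  nlinarith

lemma exists_forall_le_and_forall_lt {α : Type*} [LinearOrder α] {n : ℕ} {f : ℕ → α}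
    (hf : MonotoneOn f (Set.Iio n)) (c : α) :
    ∃ m ≤ n, (∀ i < m, f i ≤ c) ∧ ∀ i, m ≤ i → i < n → c < f i := by
  classical
  have hP : ∃ k, n ≤ k ∨ c < f k := ⟨n, Or.inl le_rfl⟩
  refine ⟨Nat.find hP, Nat.find_min' hP (Or.inl le_rfl), fun i hi => ?_, fun i hmi hin => ?_⟩
  · exact not_lt.1 fun h => Nat.find_min hP hi (Or.inr h)
  · rcases Nat.find_spec hP with h | h
    · omega
    · exact h.trans_le (hf (Set.mem_Iio.2 (by omega)) hin hmi)

lemma sum_range_pos {r : ℕ → ℝ} {k : ℕ} (hk : 0 < k) (hr : ∀ i < k, 0 < r i) :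
    0 < ∑ i ∈ range k, r i :=
  sum_pos (fun i hi => hr i (mem_range.1 hi)) (nonempty_range_iff.2 hk.ne')

lemma sq_sum_range_add_sub_pos {n i : ℕ} {ε : ℕ → ℝ} (hn : 0 < n) (hε : ∀ j < n, 0 < ε j)
    (hi : i ≤ n) : 0 < (∑ j ∈ range i, ε j) ^ 2 + ((n - i : ℕ) : ℝ) := by
  rcases hi.lt_or_eq with hi | rfl
  · exact add_pos_of_nonneg_of_pos (sq_nonneg _) (Nat.cast_pos.2 (by omega))
  · simpa using pow_pos (sum_range_pos hn hε) 2

lemma adpmRatio_pos {r : ℕ → ℝ} {k : ℕ} (hk : 0 < k) (hr : ∀ i < k, 0 < r i) :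
    0 < adpmRatio r k :=
  div_pos (by positivity) (sum_range_pos hk hr)

lemma adpmRatio_succ_le {r : ℕ → ℝ} {k : ℕ} (hk : 0 < k) (hr : ∀ i ≤ k, 0 < r i)
    (hrk : r k ≤ adpmRatio r k) : adpmRatio r (k + 1) ≤ adpmRatio r k := by
  unfold adpmRatio at *
  rw [sum_range_succ, sum_range_succ, add_right_comm]
  exact add_sq_div_add_le_div (sum_range_pos hk fun i hi => hr i hi.le) (hr k le_rfl).le hrk

lemma sum_sq_add_div_eq_adpmRatio_div (r : ℕ → ℝ) (n : ℕ) :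
    ((∑ i ∈ range n, r i ^ 2) + 8) / (4 * (∑ i ∈ range n, r i) ^ 2)
      = adpmRatio r n / (4 * ∑ i ∈ range n, r i) := by
  unfold adpmRatio
  ring

section Threshold

variable {m : ℕ} {ε : ℕ → ℝ} {c : ℝ}

lemma mul_sum_range_le_of_le_adpmRatio {i : ℕ} (hε : ∀ j ≤ i, 0 < ε j)
    (hmono : ∀ j ≤ i, ε j ≤ ε i) (hc : c ≤ adpmRatio ε (i + 1)) :
    c * ∑ j ∈ range (i + 1), ε j ≤ ε i * ∑ j ∈ range (i + 1), ε j + 8 := by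
  have hE := sum_range_pos i.succ_pos fun j hj => hε j (by omega)
  have hQ : ∑ j ∈ range (i + 1), ε j ^ 2 ≤ ε i * ∑ j ∈ range (i + 1), ε j :=
    sum_sq_le_mul_sum_s15 (fun j hj => (hε j (by simp at hj; omega)).le)
      fun j hj => hmono j (by simp at hj; omega)
  rw [adpmRatio, le_div_iff₀ hE] at hc
  linarith

theorem exists_mul_sq_sum_range_add_le (hε : ∀ i < m, 0 < ε i)
    (hmono : MonotoneOn ε (Set.Iio m)) (hc : ∀ i, 1 ≤ i → i ≤ m → c ≤ adpmRatio ε i) :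
    ∃ i ≤ m, c * ((∑ j ∈ range i, ε j) ^ 2 + ((m : ℝ) - i)) ≤ 18 * ∑ j ∈ range m, ε j := by
  classical
  have hP : ∃ t, t < m → 8 ≤ ε t * ∑ j ∈ range (t + 1), ε j := ⟨m, fun h => (lt_irrefl m h).elim⟩
  obtain ⟨t, htm, hsmall, hlarge⟩ : ∃ t ≤ m, (∀ s < t, ε s * ∑ j ∈ range (s + 1), ε j < 8) ∧
      (t < m → 8 ≤ ε t * ∑ j ∈ range (t + 1), ε j) := by
    refine ⟨Nat.find hP, Nat.find_min' hP fun h => (lt_irrefl m h).elim, fun s hs => ?_,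
      Nat.find_spec hP⟩
    exact not_le.1 (Classical.not_imp.1 (Nat.find_min hP hs)).2
  have hbound : ∀ s < m, c * ∑ j ∈ range (s + 1), ε j ≤ ε s * ∑ j ∈ range (s + 1), ε j + 8 :=
    fun s hs => mul_sum_range_le_of_le_adpmRatio (fun j hj => hε j (by omega))
      (fun j hj => hmono (Set.mem_Iio.2 (by omega)) (Set.mem_Iio.2 hs) hj) (hc (s + 1) (by omega) hs)
  have hEt : ∑ j ∈ range t, ε j ≤ ∑ j ∈ range m, ε j :=
    sum_le_sum_of_subset_of_nonneg (range_subset_range.2 htm) fun j hj _ =>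
      (hε j (mem_range.1 hj)).le
  have hsq : c * (∑ j ∈ range t, ε j) ^ 2 ≤ 16 * ∑ j ∈ range m, ε j := by
    cases t with
    | zero => simpa using sum_nonneg fun j hj => (hε j (mem_range.1 hj)).le
    | succ s =>
      have h16 := hbound s (by omega)
      have h8 := hsmall s (lt_add_one s)
      have hE := sum_range_pos s.succ_pos fun j hj => hε j (by omega)
      nlinarith
  have hlin : c * ((m : ℝ) - t) ≤ 2 * (∑ j ∈ range m, ε j - ∑ j ∈ range t, ε j) := by
    rcases htm.eq_or_lt with rfl | hlt
    · simp
    have hE := sum_range_pos t.succ_pos fun j hj => hε j (by omega)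
    have hc2 : c ≤ 2 * ε t :=
      le_of_mul_le_mul_right (by linarith [hbound t hlt, hlarge hlt]) hE
    have hgap : ((m : ℝ) - t) * ε t ≤ ∑ j ∈ range m, ε j - ∑ j ∈ range t, ε j := by
      have := card_nsmul_le_sum (Ico t m) ε (ε t) fun i hi =>
        hmono (Set.mem_Iio.2 hlt) (Set.mem_Iio.2 (mem_Ico.1 hi).2) (mem_Ico.1 hi).1
      rw [sum_Ico_eq_sub _ htm] at this
      simpa [Nat.cast_sub htm] using this
    have hmt : (0 : ℝ) ≤ m - t := sub_nonneg.2 (by exact_mod_cast htm)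
    nlinarith
  have hE₀ : 0 ≤ ∑ j ∈ range t, ε j := sum_nonneg fun j hj => (hε j (by simp at hj; omega)).le
  exact ⟨t, htm, by linarith [mul_add c ((∑ j ∈ range t, ε j) ^ 2) ((m : ℝ) - t)]⟩

end Threshold


namespace IsAdpmWeights

variable {n : ℕ} {ε r : ℕ → ℝ}

lemma pos (h : IsAdpmWeights n ε r) (hε : ∀ i < n, 0 < ε i) : ∀ k < n, 0 < r k := by
  intro k
  induction k using Nat.strong_induction_on with
  | _ k ih =>
    intro hk
    cases k with
    | zero => exact h.zero ▸ hε 0 hk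
    | succ k =>
      rw [h.succ k hk]
      exact lt_min (hε _ hk) (adpmRatio_pos k.succ_pos fun i hi => ih i hi (by omega))

lemma le_eps (h : IsAdpmWeights n ε r) : ∀ k < n, r k ≤ ε k
  | 0, _ => h.zero.le
  | k + 1, hk => (h.succ k hk).trans_le (min_le_left _ _)

lemma adpmRatio_antitoneOn (h : IsAdpmWeights n ε r) (hε : ∀ i < n, 0 < ε i) :
    AntitoneOn (adpmRatio r) (Set.Icc 1 n) := by
  refine antitoneOn_of_add_one_le Set.ordConnected_Icc ?_
  rintro k - ⟨hk, -⟩ ⟨-, hkn⟩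
  obtain ⟨j, rfl⟩ : ∃ j, k = j + 1 := ⟨k - 1, by omega⟩
  refine adpmRatio_succ_le hk (fun i hi => h.pos hε i (by omega)) ?_
  rw [h.succ j (by omega)]
  exact min_le_right _ _

lemma min_le (h : IsAdpmWeights n ε r) (hε : ∀ i < n, 0 < ε i) :
    ∀ k < n, min (ε k) (adpmRatio r n) ≤ r k
  | 0, _ => h.zero ▸ min_le_left _ _
  | k + 1, hk => by
    rw [h.succ k hk]
    exact min_le_min_left _
      (h.adpmRatio_antitoneOn hε ⟨by omega, by omega⟩ ⟨by omega, le_rfl⟩ hk.le)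

lemma eq_of_le_adpmRatio (h : IsAdpmWeights n ε r) (hε : ∀ i < n, 0 < ε i) {k : ℕ} (hk : k < n)
    (hεk : ε k ≤ adpmRatio r n) : r k = ε k :=
  (h.le_eps k hk).antisymm (min_eq_left hεk ▸ h.min_le hε k hk)

lemma adpmRatio_eq_of_forall_le (h : IsAdpmWeights n ε r) (hε : ∀ i < n, 0 < ε i) {i : ℕ}
    (hi : i ≤ n) (hεi : ∀ j < i, ε j ≤ adpmRatio r n) : adpmRatio r i = adpmRatio ε i := by
  have hrε : ∀ j ∈ range i, r j = ε j := fun j hj =>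
    h.eq_of_le_adpmRatio hε (by simp at hj; omega) (hεi j (mem_range.1 hj))
  unfold adpmRatio
  rw [sum_congr rfl hrε, sum_congr rfl fun j hj => by rw [hrε j hj]]

lemma sum_range_add_le_sum (h : IsAdpmWeights n ε r) (hε : ∀ i < n, 0 < ε i) {m : ℕ}
    (hmn : m ≤ n) (hlow : ∀ i < m, ε i ≤ adpmRatio r n)
    (hhigh : ∀ i, m ≤ i → i < n → adpmRatio r n < ε i) :
    ∑ i ∈ range m, ε i + ((n : ℝ) - m) * adpmRatio r n ≤ ∑ i ∈ range n, r i := by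
  rw [← sum_range_add_sum_Ico _ hmn]
  gcongr with i hi
  · exact (h.eq_of_le_adpmRatio hε (by simp at hi; omega) (hlow i (mem_range.1 hi))).ge
  · have := card_nsmul_le_sum (Ico m n) r (adpmRatio r n) fun i hi => by
      obtain ⟨hmi, hin⟩ := mem_Ico.1 hi
      simpa [min_eq_right (hhigh i hmi hin).le] using h.min_le hε i hin
    simpa [Nat.cast_sub hmn] using this

end IsAdpmWeights

/-- Theorem opt, upper vs lower bound: For every `n ≥ 1` and nondecreasing
positive `ε` (0-indexed, length `n`), with the ADPM weights `r` (0-indexed: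
`r 0 = ε 0`, `r (k+1) = min (ε (k+1)) ((∑_{i<k+1} r i² + 8)/(∑_{i<k+1} r i))`),
`((∑_{i<n} r i ^ 2) + 8) / (4 (∑_{i<n} r i)²) ≤ 443 * H(ε)` where
`H(ε) = max_{0 ≤ i ≤ n} 1 / ((∑_{j<i} ε j)² + (n - i))`. -/
theorem adpm_optimality (n : ℕ) (hn : 1 ≤ n) (ε r : ℕ → ℝ)
    (hpos : ∀ i < n, 0 < ε i)
    (hmono : ∀ i j : ℕ, i ≤ j → j < n → ε i ≤ ε j)
    (hr0 : r 0 = ε 0)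
    (hrec : ∀ k : ℕ, k + 1 < n → r (k + 1) = min (ε (k + 1))
      (((∑ i ∈ Finset.range (k + 1), (r i) ^ 2) + 8) / (∑ i ∈ Finset.range (k + 1), r i))) :
    ((∑ i ∈ Finset.range n, (r i) ^ 2) + 8) / (4 * (∑ i ∈ Finset.range n, r i) ^ 2)
      ≤ 443 * (Finset.range (n + 1)).sup' Finset.nonempty_range_add_one
          (fun i => 1 / ((∑ j ∈ Finset.range i, ε j) ^ 2 + ((n - i : ℕ) : ℝ))) := by
  have h : IsAdpmWeights n ε r := ⟨hr0, hrec⟩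
  have hεmono : MonotoneOn ε (Set.Iio n) := fun i _ j hj hij => hmono i j hij hj
  set c := adpmRatio r n
  have hc : 0 < c := adpmRatio_pos hn (h.pos hpos)
  have hS : 0 < ∑ i ∈ range n, r i := sum_range_pos hn (h.pos hpos)
  obtain ⟨m, hmn, hlow, hhigh⟩ := exists_forall_le_and_forall_lt hεmono c
  obtain ⟨i, him, hi⟩ := exists_mul_sq_sum_range_add_le (m := m) (c := c)
    (fun i hi => hpos i (by omega)) (hεmono.mono (Set.Iio_subset_Iio hmn)) fun i h₁ h₂ =>
      h.adpmRatio_eq_of_forall_le hpos (h₂.trans hmn) (fun j hj => hlow j (by omega)) ▸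
        h.adpmRatio_antitoneOn hpos ⟨h₁, h₂.trans hmn⟩ ⟨hn, le_rfl⟩ (h₂.trans hmn)
  have hsum := h.sum_range_add_le_sum hpos hmn hlow hhigh
  have hD := sq_sum_range_add_sub_pos hn hpos (him.trans hmn)
  rw [sum_sq_add_div_eq_adpmRatio_div]
  calc c / (4 * ∑ i ∈ range n, r i)
      ≤ 443 * (1 / ((∑ j ∈ range i, ε j) ^ 2 + ((n - i : ℕ) : ℝ))) := by
        rw [mul_one_div, div_le_div_iff₀ (by positivity) hD, Nat.cast_sub (him.trans hmn)]
        have : (0 : ℝ) ≤ n - m := sub_nonneg.2 (by exact_mod_cast hmn)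
        nlinarith
    _ ≤ _ := mul_le_mul_of_nonneg_left
        (le_sup' (fun i => 1 / ((∑ j ∈ range i, ε j) ^ 2 + ((n - i : ℕ) : ℝ)))
          (mem_range.2 (by omega))) (by norm_num)
end

section
/- Let n ≥ 1 and let ε₁ ≤ … ≤ εₙ be positive reals. Let M be a Markov kernel from (Fin n → ℝ) to ℝ satisfying heterogeneous ε-differential privacy: for every index i, every pair of datasets x, x' ∈ [−1/2, 1/2]ⁿ that agree in all coordinates except possibly the i-th, and every measurable set S ⊆ ℝ, M(x)(S) ≤ e^{εᵢ} · M(x')(S). Then the worst-case mean-squared error of M is lower bounded: sup over probability measures P on ℝ with P([−1/2,1/2]) = 1 of ∫_{x ∼ Pⁿ} ∫_{y ∼ M(x)} (y − μ_P)² ≥ (1/512) · min{ H(ε), 1/4 }, where μ_P = ∫ t dP(t) and H(ε) = max_{0 ≤ i ≤ n} 1/((Σ_{j=1}^i ε_j)² + n − i). -/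
/-!
Le Cam's two-point method. Put on each coordinate the two-point prior at `±1/2` with mean `±δ`,
and test the sign of the estimate: a mean estimator with small risk under both priors would
separate the two product laws of the data, so their distance bounds the risk from below.
The test sees that distance only through `u(b) = M(x_b)([0, ∞))` on the vertices `x_b` of
the cube, and a hybrid argument bounds it coordinate by coordinate: on the first `i` coordinates
`ε`-DP lets a single coordinate move `u` by at most `εⱼ`, so switching their biases costs
`2δ ∑_{j<i} εⱼ`; the remaining `n - i` coordinates are handled at once by the Hellinger
(Bhattacharyya) bound on total variation, which costs only `2δ √(n - i)`. Choosing
`δ ≍ ((∑_{j<i} εⱼ)² + n - i)^(-1/2)` for the maximizing `i` gives the bound.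
-/

open Finset Function Real MeasureTheory ProbabilityTheory

section TotalVariation

variable {α : Type*} [Fintype α]

lemma sum_sub_mul_le_half_sum_abs_sub {f g u : α → ℝ} (hfg : ∑ b, f b = ∑ b, g b)
    (hu0 : ∀ b, 0 ≤ u b) (hu1 : ∀ b, u b ≤ 1) :
    ∑ b, (f b - g b) * u b ≤ (∑ b, |f b - g b|) / 2 := by
  have hterm : ∀ b, (f b - g b) * u b ≤ (|f b - g b| + (f b - g b)) / 2 := by
    intro b
    cases abs_cases (f b - g b) <;> nlinarith [hu0 b, hu1 b]
  calc ∑ b, (f b - g b) * u b ≤ ∑ b, (|f b - g b| + (f b - g b)) / 2 :=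
        sum_le_sum fun b _ => hterm b
    _ = (∑ b, |f b - g b|) / 2 := by
      rw [← sum_div, sum_add_distrib, sum_sub_distrib, hfg, sub_self, add_zero]

/-- Total variation is controlled by the Bhattacharyya coefficient `∑ √(f g)`. -/
lemma sq_sum_abs_sub_le {f g : α → ℝ} (hf : ∀ b, 0 ≤ f b) (hg : ∀ b, 0 ≤ g b)
    (hf1 : ∑ b, f b = 1) (hg1 : ∑ b, g b = 1) :
    (∑ b, |f b - g b|) ^ 2 ≤ 4 * (1 - (∑ b, √(f b * g b)) ^ 2) := by
  set β := ∑ b, √(f b * g b)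
  have hfactor : ∀ b, |f b - g b| = |√(f b) - √(g b)| * (√(f b) + √(g b)) := by
    intro b
    have h : f b - g b = (√(f b) - √(g b)) * (√(f b) + √(g b)) := by
      linear_combination -sq_sqrt (hf b) + sq_sqrt (hg b)
    rw [h, abs_mul, abs_of_nonneg (by positivity : 0 ≤ √(f b) + √(g b))]
  have hsq : ∀ s : ℝ, s ^ 2 = 1 → ∑ b, (√(f b) + s * √(g b)) ^ 2 = 2 + 2 * s * β := by
    intro s hs
    have hterm : ∀ b, (√(f b) + s * √(g b)) ^ 2 = f b + g b + 2 * s * √(f b * g b) := by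
      intro b
      rw [sqrt_mul (hf b)]
      linear_combination sq_sqrt (hf b) + (√(g b)) ^ 2 * hs + sq_sqrt (hg b)
    simp only [hterm, sum_add_distrib, ← mul_sum, hf1, hg1, β]
    ring
  calc (∑ b, |f b - g b|) ^ 2
      = (∑ b, |√(f b) - √(g b)| * (√(f b) + √(g b))) ^ 2 := by simp_rw [hfactor]
    _ ≤ (∑ b, |√(f b) - √(g b)| ^ 2) * ∑ b, (√(f b) + √(g b)) ^ 2 :=
      sum_mul_sq_le_sq_mul_sq _ _ _
    _ = (2 - 2 * β) * (2 + 2 * β) := by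
      have hminus := hsq (-1) (by norm_num)
      have hplus := hsq 1 (by norm_num)
      simp only [sq_abs, neg_one_mul, one_mul, ← sub_eq_add_neg] at hminus hplus ⊢
      rw [hminus, hplus]
      ring
    _ = 4 * (1 - β ^ 2) := by ring

end TotalVariation

section BernoulliCube

variable {ι : Type*} [Fintype ι]

def bernoulliWeight (a : ℝ) (t : Bool) : ℝ := if t then a else 1 - a

def prodBernoulli (a : ι → ℝ) (b : ι → Bool) : ℝ := ∏ j, bernoulliWeight (a j) (b j)

lemma bernoulliWeight_nonneg {a : ℝ} (ha : a ∈ Set.Icc 0 1) (t : Bool) :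
    0 ≤ bernoulliWeight a t := by
  cases t <;> simp [bernoulliWeight, ha.1, ha.2]

lemma sum_bernoulliWeight (a : ℝ) : ∑ t, bernoulliWeight a t = 1 := by
  simp [bernoulliWeight]

lemma prodBernoulli_nonneg {a : ι → ℝ} (ha : ∀ j, a j ∈ Set.Icc 0 1) (b : ι → Bool) :
    0 ≤ prodBernoulli a b :=
  prod_nonneg fun j _ => bernoulliWeight_nonneg (ha j) (b j)

variable [DecidableEq ι]

lemma sum_prodBernoulli (a : ι → ℝ) : ∑ b, prodBernoulli a b = 1 := by
  simp only [prodBernoulli, ← Fintype.prod_sum, sum_bernoulliWeight, prod_const_one]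

lemma prodBernoulli_funSplitAt_symm (a : ι → ℝ) (k : ι) (t : Bool) (c : {j // j ≠ k} → Bool) :
    prodBernoulli a ((Equiv.funSplitAt k Bool).symm (t, c)) =
      bernoulliWeight (a k) t * prodBernoulli (fun j : {j // j ≠ k} => a j) c := by
  rw [prodBernoulli, Fintype.prod_eq_mul_prod_subtype_ne _ k]
  congr 1
  · simp
  · exact prod_congr rfl fun j _ => by simp [j.2]

lemma sum_prodBernoulli_update_sub_mul_le (a : ι → ℝ) (k : ι)
    (ha : ∀ j ≠ k, a j ∈ Set.Icc 0 1) {x y e : ℝ} (hyx : y ≤ x) (u : (ι → Bool) → ℝ)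
    (hu : ∀ b, u (update b k true) - u (update b k false) ≤ e) :
    ∑ b, (prodBernoulli (update a k x) b - prodBernoulli (update a k y) b) * u b ≤ (x - y) * e := by
  set σ := (Equiv.funSplitAt k Bool).symm
  set ρ := prodBernoulli (fun j : {j // j ≠ k} => a j)
  have hρ : ∀ c, 0 ≤ ρ c := prodBernoulli_nonneg fun j => ha j j.2
  have hflip : ∀ c, u (σ (true, c)) - u (σ (false, c)) ≤ e := by
    intro c
    convert hu (σ (true, c)) using 3 <;> ext j <;> by_cases hj : j = k <;>
      simp [σ, Equiv.funSplitAt_symm_apply, hj]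
  have hrestrict : ∀ z, (fun j : {j // j ≠ k} => update a k z j) = fun j : {j // j ≠ k} => a j :=
    fun z => funext fun j => update_of_ne j.2 _ _
  calc ∑ b, (prodBernoulli (update a k x) b - prodBernoulli (update a k y) b) * u b
      = ∑ c, (x - y) * ρ c * (u (σ (true, c)) - u (σ (false, c))) := by
        rw [← σ.sum_comp, Fintype.sum_prod_type, Fintype.sum_bool, ← sum_add_distrib]
        refine sum_congr rfl fun c _ => ?_
        simp only [σ, prodBernoulli_funSplitAt_symm, hrestrict, update_self, bernoulliWeight]
        simp only [if_true, Bool.false_eq_true, if_false, ρ]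
        ring
    _ ≤ ∑ c, (x - y) * ρ c * e :=
        sum_le_sum fun c _ => mul_le_mul_of_nonneg_left (hflip c)
          (mul_nonneg (sub_nonneg.2 hyx) (hρ c))
    _ = (x - y) * e := by rw [← sum_mul, ← mul_sum, sum_prodBernoulli, mul_one]

lemma sum_sqrt_prodBernoulli_mul {a a' : ι → ℝ} (ha : ∀ j, a j ∈ Set.Icc 0 1)
    (ha' : ∀ j, a' j ∈ Set.Icc 0 1) :
    ∑ b, √(prodBernoulli a b * prodBernoulli a' b) =
      ∏ j, ∑ t, √(bernoulliWeight (a j) t * bernoulliWeight (a' j) t) := by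
  rw [Fintype.prod_sum]
  refine sum_congr rfl fun b _ => ?_
  rw [prodBernoulli, prodBernoulli, ← prod_mul_distrib, sqrt_prod _ fun j _ =>
    mul_nonneg (bernoulliWeight_nonneg (ha j) _) (bernoulliWeight_nonneg (ha' j) _)]

end BernoulliCube

section Hybrid

variable {n : ℕ} {δ : ℝ}

noncomputable def hybridBias (δ : ℝ) (k : ℕ) (j : Fin n) : ℝ :=
  if (j : ℕ) < k then 1 / 2 - δ else 1 / 2 + δ

lemma hybridBias_mem_Icc (hδ0 : 0 ≤ δ) (hδ : δ ≤ 1 / 2) (k : ℕ) (j : Fin n) :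
    hybridBias δ k j ∈ Set.Icc 0 1 := by
  unfold hybridBias
  split_ifs <;> constructor <;> linarith

lemma sum_prodBernoulli_hybridBias_sub_mul_le (hδ0 : 0 ≤ δ) (hδ : δ ≤ 1 / 2) {i : ℕ} (hi : i ≤ n)
    (ε : ℕ → ℝ) (u : (Fin n → Bool) → ℝ)
    (hu : ∀ k : Fin n, (k : ℕ) < i → ∀ b, u (update b k true) - u (update b k false) ≤ ε k) :
    ∑ b, (prodBernoulli (hybridBias δ 0) b - prodBernoulli (hybridBias δ i) b) * u b ≤
      2 * δ * ∑ k ∈ range i, ε k := by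
  have hstep : ∀ k < i, ∑ b, (prodBernoulli (hybridBias δ k) b -
      prodBernoulli (hybridBias δ (k + 1)) b) * u b ≤ 2 * δ * ε k := by
    intro k hk
    set K : Fin n := ⟨k, by omega⟩
    have hbias : update (hybridBias δ k) K (1 / 2 + δ) = hybridBias δ k :=
      update_eq_self_iff.2 (by simp [hybridBias, K])
    have hbias_succ : update (hybridBias δ k) K (1 / 2 - δ) = hybridBias δ (k + 1) := by
      ext j
      by_cases hj : j = K
      · simp [hj, hybridBias, K]
      · have : (j : ℕ) ≠ k := fun h => hj (Fin.ext h)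
        simp only [hybridBias, update_of_ne hj, Nat.lt_succ_iff_lt_or_eq, this, or_false]
    have := sum_prodBernoulli_update_sub_mul_le (hybridBias δ k) K
      (fun j _ => hybridBias_mem_Icc hδ0 hδ k j) (by linarith : 1 / 2 - δ ≤ 1 / 2 + δ) u (hu K hk)
    rw [hbias, hbias_succ] at this
    exact this.trans_eq (by ring)
  calc ∑ b, (prodBernoulli (hybridBias δ 0) b - prodBernoulli (hybridBias δ i) b) * u b
      = ∑ k ∈ range i, ∑ b, (prodBernoulli (hybridBias δ k) b -
          prodBernoulli (hybridBias δ (k + 1)) b) * u b := by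
        rw [sum_comm]
        simp only [← sum_mul, sum_range_sub' (fun k => prodBernoulli (hybridBias δ k) _)]
    _ ≤ ∑ k ∈ range i, 2 * δ * ε k := sum_le_sum fun k hk => hstep k (mem_range.1 hk)
    _ = 2 * δ * ∑ k ∈ range i, ε k := (mul_sum _ _ _).symm

lemma sum_prodBernoulli_hybridBias_sub_mul_le_sqrt (hδ0 : 0 ≤ δ) (hδ : δ ≤ 1 / 2) (i : ℕ)
    {u : (Fin n → Bool) → ℝ} (hu0 : ∀ b, 0 ≤ u b) (hu1 : ∀ b, u b ≤ 1) :
    ∑ b, (prodBernoulli (hybridBias δ i) b - prodBernoulli (hybridBias δ n) b) * u b ≤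
      2 * δ * √((n - i : ℕ) : ℝ) := by
  set m := n - i
  set f := prodBernoulli (hybridBias (n := n) δ i)
  set g := prodBernoulli (hybridBias (n := n) δ n)
  set c := 2 * √((1 / 2 + δ) * (1 / 2 - δ))
  have hc : c ^ 2 = 1 - 4 * δ ^ 2 := by
    rw [mul_pow, sq_sqrt (by nlinarith)]
    ring
  have hcoord : ∀ j : Fin n, ∑ t, √(bernoulliWeight (hybridBias δ i j) t *
      bernoulliWeight (hybridBias δ n j) t) = if (j : ℕ) < i then 1 else c := by
    intro j
    simp only [hybridBias, bernoulliWeight, j.2, if_true, Fintype.sum_bool, if_false,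
      Bool.false_eq_true]
    split_ifs
    · rw [sqrt_mul_self (by linarith), sqrt_mul_self (by linarith)]
      ring
    · rw [show 1 - (1 / 2 + δ) = 1 / 2 - δ by ring, show 1 - (1 / 2 - δ) = 1 / 2 + δ by ring,
        mul_comm (1 / 2 - δ)]
      ring
  have hβ : ∑ b, √(f b * g b) = c ^ m := by
    rw [sum_sqrt_prodBernoulli_mul (hybridBias_mem_Icc hδ0 hδ i) (hybridBias_mem_Icc hδ0 hδ n)]
    simp only [hcoord, prod_ite, prod_const_one, one_mul, prod_const]
    congr 1
    have := card_filter_add_card_filter_not (s := univ) fun j : Fin n => (j : ℕ) < i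
    rw [Fin.card_filter_val_lt, card_univ, Fintype.card_fin] at this
    omega
  have hbern : 1 - m * (4 * δ ^ 2) ≤ (c ^ m) ^ 2 := by
    rw [← pow_mul, mul_comm m 2, pow_mul, hc]
    simpa [sub_eq_add_neg] using one_add_mul_le_pow (by nlinarith : -2 ≤ -(4 * δ ^ 2)) m
  have htv : ∑ b, |f b - g b| ≤ 4 * δ * √(m : ℝ) := by
    refine (pow_le_pow_iff_left₀ (by positivity) (by positivity) two_ne_zero).1 ?_
    calc (∑ b, |f b - g b|) ^ 2 ≤ 4 * (1 - (∑ b, √(f b * g b)) ^ 2) :=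
          sq_sum_abs_sub_le (prodBernoulli_nonneg (hybridBias_mem_Icc hδ0 hδ i))
            (prodBernoulli_nonneg (hybridBias_mem_Icc hδ0 hδ n)) (sum_prodBernoulli _)
            (sum_prodBernoulli _)
      _ ≤ (4 * δ * √(m : ℝ)) ^ 2 := by
          have hsq : (4 * δ * √(m : ℝ)) ^ 2 = 16 * δ ^ 2 * m := by
            rw [mul_pow, sq_sqrt m.cast_nonneg]
            ring
          rw [hβ, hsq]
          linarith
  calc ∑ b, (f b - g b) * u b ≤ (∑ b, |f b - g b|) / 2 :=
        sum_sub_mul_le_half_sum_abs_sub (by rw [sum_prodBernoulli, sum_prodBernoulli]) hu0 hu1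
    _ ≤ 2 * δ * √(m : ℝ) := by linarith

lemma sum_prodBernoulli_sub_mul_le (hδ0 : 0 ≤ δ) (hδ : δ ≤ 1 / 2) {i : ℕ} (hi : i ≤ n)
    (ε : ℕ → ℝ) {u : (Fin n → Bool) → ℝ} (hu0 : ∀ b, 0 ≤ u b) (hu1 : ∀ b, u b ≤ 1)
    (hu : ∀ k : Fin n, (k : ℕ) < i → ∀ b, u (update b k true) - u (update b k false) ≤ ε k) :
    ∑ b, (prodBernoulli (fun _ => 1 / 2 + δ) b - prodBernoulli (fun _ => 1 / 2 - δ) b) * u b ≤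
      2 * δ * ∑ k ∈ range i, ε k + 2 * δ * √((n - i : ℕ) : ℝ) := by
  have h0 : hybridBias (n := n) δ 0 = fun _ => 1 / 2 + δ := by ext j; simp [hybridBias]
  have hn : hybridBias (n := n) δ n = fun _ => 1 / 2 - δ := by ext j; simp [hybridBias, j.2]
  rw [← h0, ← hn]
  calc _ = ∑ b, (prodBernoulli (hybridBias δ 0) b - prodBernoulli (hybridBias δ i) b) * u b +
        ∑ b, (prodBernoulli (hybridBias δ i) b - prodBernoulli (hybridBias δ n) b) * u b := by
        rw [← sum_add_distrib]
        exact sum_congr rfl fun b _ => by ring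
    _ ≤ _ := add_le_add (sum_prodBernoulli_hybridBias_sub_mul_le hδ0 hδ hi ε u hu)
        (sum_prodBernoulli_hybridBias_sub_mul_le_sqrt hδ0 hδ i hu0 hu1)

end Hybrid

section TwoPointPrior

noncomputable def halfSign (t : Bool) : ℝ := if t then 1 / 2 else -1 / 2

noncomputable def coinMeasure (a : ℝ) : Measure Bool :=
  ENNReal.ofReal a • Measure.dirac true + ENNReal.ofReal (1 - a) • Measure.dirac false

noncomputable def twoPoint (a : ℝ) : Measure ℝ := (coinMeasure a).map halfSign

variable {a : ℝ}

lemma halfSign_mem_Icc (t : Bool) : halfSign t ∈ Set.Icc (-1 / 2) (1 / 2) := by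
  cases t <;> norm_num [halfSign]

lemma coinMeasure_singleton (a : ℝ) (t : Bool) :
    coinMeasure a {t} = ENNReal.ofReal (bernoulliWeight a t) := by
  cases t <;> simp [coinMeasure, bernoulliWeight]

lemma isProbabilityMeasure_coinMeasure (ha : a ∈ Set.Icc 0 1) :
    IsProbabilityMeasure (coinMeasure a) := by
  constructor
  simp [coinMeasure, ← ENNReal.ofReal_add ha.1 (sub_nonneg.2 ha.2)]

lemma isProbabilityMeasure_twoPoint (ha : a ∈ Set.Icc 0 1) : IsProbabilityMeasure (twoPoint a) :=
  have := isProbabilityMeasure_coinMeasure ha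
  Measure.isProbabilityMeasure_map (measurable_of_finite _).aemeasurable

lemma twoPoint_Icc (ha : a ∈ Set.Icc 0 1) : twoPoint a (Set.Icc (-1 / 2) (1 / 2)) = 1 := by
  have := isProbabilityMeasure_coinMeasure ha
  rw [twoPoint, Measure.map_apply (measurable_of_finite _) measurableSet_Icc]
  have hpre : halfSign ⁻¹' Set.Icc (-1 / 2) (1 / 2) = Set.univ := by
    ext t
    cases t <;> norm_num [halfSign]
  rw [hpre, measure_univ]

lemma integral_id_twoPoint (ha : a ∈ Set.Icc 0 1) : ∫ t, t ∂twoPoint a = a - 1 / 2 := by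
  have := isProbabilityMeasure_coinMeasure ha
  rw [twoPoint, integral_map (f := fun t => t) (measurable_of_finite _).aemeasurable
    aestronglyMeasurable_id, integral_fintype .of_finite]
  rw [Fintype.sum_bool]
  simp only [Measure.real, coinMeasure_singleton, bernoulliWeight, halfSign, if_true, if_false,
    Bool.false_eq_true, smul_eq_mul, ENNReal.toReal_ofReal ha.1,
    ENNReal.toReal_ofReal (sub_nonneg.2 ha.2)]
  ring

lemma lintegral_pi_twoPoint {ι : Type*} [Fintype ι] [DecidableEq ι] (ha : a ∈ Set.Icc 0 1)
    {F : (ι → ℝ) → ENNReal} (hF : Measurable F) :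
    ∫⁻ x, F x ∂(Measure.pi fun _ : ι => twoPoint a) =
      ∑ b, ENNReal.ofReal (prodBernoulli (fun _ => a) b) * F (fun j => halfSign (b j)) := by
  have := isProbabilityMeasure_coinMeasure ha
  rw [twoPoint, ← Measure.pi_map_pi fun _ => (measurable_of_finite _).aemeasurable,
    lintegral_map hF (measurable_of_finite _), lintegral_fintype]
  refine sum_congr rfl fun b _ => ?_
  rw [mul_comm, Measure.pi_singleton, prodBernoulli,
    ENNReal.ofReal_prod_of_nonneg fun j _ => bernoulliWeight_nonneg ha _]
  simp [coinMeasure_singleton]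

end TwoPointPrior

section Risk

variable {ι : Type*} [Fintype ι]

noncomputable def mseRisk (M : Kernel (ι → ℝ) ℝ) (P : Measure ℝ) : ENNReal :=
  ∫⁻ x, (∫⁻ y, ENNReal.ofReal ((y - ∫ t, t ∂P) ^ 2) ∂(M x)) ∂(Measure.pi fun _ : ι => P)

noncomputable def worstCaseRisk (M : Kernel (ι → ℝ) ℝ) : ENNReal :=
  ⨆ (P : Measure ℝ) (_ : IsProbabilityMeasure P) (_ : P (Set.Icc (-1 / 2) (1 / 2)) = 1),
    mseRisk M P

lemma mseRisk_le_worstCaseRisk (M : Kernel (ι → ℝ) ℝ) (P : Measure ℝ) [IsProbabilityMeasure P]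
    (hP : P (Set.Icc (-1 / 2) (1 / 2)) = 1) : mseRisk M P ≤ worstCaseRisk M :=
  le_iSup₂_of_le P ‹_› (le_iSup_of_le hP le_rfl)

lemma ofReal_sq_mul_le_lintegral (ν : Measure ℝ) {c r : ℝ} {s : Set ℝ}
    (hs : ∀ y ∈ s, r ^ 2 ≤ (y - c) ^ 2) :
    ENNReal.ofReal (r ^ 2) * ν s ≤ ∫⁻ y, ENNReal.ofReal ((y - c) ^ 2) ∂ν :=
  calc ENNReal.ofReal (r ^ 2) * ν s
      ≤ ENNReal.ofReal (r ^ 2) * ν {y | ENNReal.ofReal (r ^ 2) ≤ ENNReal.ofReal ((y - c) ^ 2)} :=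
        mul_le_mul_right (measure_mono fun y hy => ENNReal.ofReal_le_ofReal (hs y hy)) _
    _ ≤ _ := mul_meas_ge_le_lintegral (by fun_prop) _

lemma ofReal_mul_sum_le_mseRisk_twoPoint [DecidableEq ι] (M : Kernel (ι → ℝ) ℝ) {a r : ℝ}
    (ha : a ∈ Set.Icc 0 1) {s : Set ℝ} (hs : ∀ y ∈ s, r ^ 2 ≤ (y - (a - 1 / 2)) ^ 2) :
    ENNReal.ofReal (r ^ 2 * ∑ b, prodBernoulli (fun _ => a) b *
        (M fun j => halfSign (b j)).real s) ≤ mseRisk M (twoPoint a) := by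
  rw [mseRisk, integral_id_twoPoint ha,
    lintegral_pi_twoPoint ha (Measurable.lintegral_kernel (by fun_prop)), mul_sum,
    ENNReal.ofReal_sum_of_nonneg fun b _ => by
      have := prodBernoulli_nonneg (fun _ : ι => ha) b
      positivity]
  refine sum_le_sum fun b _ => ?_
  rw [mul_left_comm, ENNReal.ofReal_mul (prodBernoulli_nonneg (fun _ => ha) b),
    ENNReal.ofReal_mul (sq_nonneg r)]
  gcongr
  exact (mul_le_mul_right ENNReal.ofReal_toReal_le _).trans (ofReal_sq_mul_le_lintegral _ hs)

end Risk

section DifferentialPrivacy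

variable {n : ℕ}

def IsHeterogeneousDP (M : Kernel (Fin n → ℝ) ℝ) (ε : ℕ → ℝ) : Prop :=
  ∀ (i : Fin n) (x x' : Fin n → ℝ),
    (∀ j, x j ∈ Set.Icc (-(1 : ℝ) / 2) (1 / 2)) →
    (∀ j, x' j ∈ Set.Icc (-(1 : ℝ) / 2) (1 / 2)) →
    (∀ j, j ≠ i → x j = x' j) →
    ∀ S : Set ℝ, MeasurableSet S → M x S ≤ ENNReal.ofReal (Real.exp (ε i.1)) * M x' S

lemma sub_le_of_le_exp_mul {u v ε : ℝ} (hε : 0 ≤ ε) (hu : u ≤ 1) (h : u ≤ exp ε * v) :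
    u - v ≤ ε := by
  have hv : exp (-ε) * u ≤ v := by
    calc exp (-ε) * u ≤ exp (-ε) * (exp ε * v) := by gcongr
      _ = v := by rw [← mul_assoc, ← exp_add, neg_add_cancel, exp_zero, one_mul]
  have hexp : 1 - exp (-ε) ≤ ε := by linarith [add_one_le_exp (-ε)]
  have hexp1 : exp (-ε) ≤ 1 := exp_le_one_iff.2 (by linarith)
  nlinarith [mul_nonneg (sub_nonneg.2 hu) (sub_nonneg.2 hexp1)]

lemma IsHeterogeneousDP.measureReal_update_sub_le {M : Kernel (Fin n → ℝ) ℝ} [IsMarkovKernel M]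
    {ε : ℕ → ℝ} (hM : IsHeterogeneousDP M ε) {k : Fin n} (hε : 0 ≤ ε k) (b : Fin n → Bool)
    {s : Set ℝ} (hs : MeasurableSet s) :
    (M fun j => halfSign (update b k true j)).real s -
      (M fun j => halfSign (update b k false j)).real s ≤ ε k := by
  have h := hM k (fun j => halfSign (update b k true j)) (fun j => halfSign (update b k false j))
    (fun j => halfSign_mem_Icc _) (fun j => halfSign_mem_Icc _)
    (fun j hj => by simp only [update_of_ne hj]) s hs
  refine sub_le_of_le_exp_mul hε measureReal_le_one ?_
  have := ENNReal.toReal_mono (by finiteness) h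
  rwa [ENNReal.toReal_mul, ENNReal.toReal_ofReal (exp_nonneg _)] at this

theorem ofReal_sq_div_four_le_worstCaseRisk {M : Kernel (Fin n → ℝ) ℝ} [IsMarkovKernel M]
    {ε : ℕ → ℝ} (hM : IsHeterogeneousDP M ε) {i : ℕ} (hi : i ≤ n) (hε : ∀ k < i, 0 ≤ ε k)
    {δ : ℝ} (hδ0 : 0 ≤ δ) (hδ : δ ≤ 1 / 2)
    (hbudget : 2 * δ * ∑ k ∈ range i, ε k + 2 * δ * √((n - i : ℕ) : ℝ) ≤ 1 / 2) :
    ENNReal.ofReal (δ ^ 2 / 4) ≤ worstCaseRisk M := by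
  set wPlus := prodBernoulli (fun _ : Fin n => 1 / 2 + δ)
  set wMinus := prodBernoulli (fun _ : Fin n => 1 / 2 - δ)
  set ν : (Fin n → Bool) → Measure ℝ := fun b => M fun j => halfSign (b j)
  set u : (Fin n → Bool) → ℝ := fun b => (ν b).real (Set.Ici 0)
  have hsep := sum_prodBernoulli_sub_mul_le hδ0 hδ hi ε (u := u) (fun b => measureReal_nonneg)
    (fun b => measureReal_le_one)
    (fun k hk b => hM.measureReal_update_sub_le (hε k hk) b measurableSet_Ici)
  have hp : 1 / 2 + δ ∈ Set.Icc (0 : ℝ) 1 := ⟨by linarith, by linarith⟩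
  have hq : 1 / 2 - δ ∈ Set.Icc (0 : ℝ) 1 := ⟨by linarith, by linarith⟩
  have := isProbabilityMeasure_twoPoint hp
  have := isProbabilityMeasure_twoPoint hq
  have hneg : ∀ y ∈ Set.Iio (0 : ℝ), δ ^ 2 ≤ (y - (1 / 2 + δ - 1 / 2)) ^ 2 := by
    intro y (hy : y < 0)
    nlinarith
  have hnonneg : ∀ y ∈ Set.Ici (0 : ℝ), δ ^ 2 ≤ (y - (1 / 2 - δ - 1 / 2)) ^ 2 := by
    intro y (hy : 0 ≤ y)
    nlinarith
  have hcompl : ∀ b, (ν b).real (Set.Iio 0) = 1 - u b := fun b => by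
    rw [← Set.compl_Ici, probReal_compl_eq_one_sub measurableSet_Ici]
  -- Le Cam: the two errors of the sign test add up to at least `1/2`.
  have hsum : δ ^ 2 / 2 ≤ δ ^ 2 * ∑ b, wPlus b * (ν b).real (Set.Iio 0) +
      δ ^ 2 * ∑ b, wMinus b * (ν b).real (Set.Ici 0) := by
    have hw : ∑ b, wPlus b * (1 - u b) + ∑ b, wMinus b * u b =
        1 - ∑ b, (wPlus b - wMinus b) * u b := by
      simp only [mul_sub, sub_mul, mul_one, sum_sub_distrib, wPlus, sum_prodBernoulli]
      ring
    simp only [hcompl]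
    rw [← mul_add, hw]
    nlinarith [sq_nonneg δ]
  rcases le_or_gt (δ ^ 2 / 4) (δ ^ 2 * ∑ b, wPlus b * (ν b).real (Set.Iio 0)) with h | h
  · exact (ENNReal.ofReal_le_ofReal h).trans <|
      (ofReal_mul_sum_le_mseRisk_twoPoint M hp hneg).trans
      (mseRisk_le_worstCaseRisk M _ (twoPoint_Icc hp))
  · exact (ENNReal.ofReal_le_ofReal (by linarith)).trans <|
      (ofReal_mul_sum_le_mseRisk_twoPoint M hq hnonneg).trans
      (mseRisk_le_worstCaseRisk M _ (twoPoint_Icc hq))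

end DifferentialPrivacy

lemma exists_separation {S m : ℝ} (hm : 0 ≤ m) :
    ∃ δ : ℝ, 0 ≤ δ ∧ δ ≤ 1 / 2 ∧ 2 * δ * S + 2 * δ * √m ≤ 1 / 2 ∧
      1 / 512 * min (1 / (S ^ 2 + m)) (1 / 4) ≤ δ ^ 2 / 4 := by
  set K := √(S ^ 2 + m)
  have hK0 : 0 ≤ K := sqrt_nonneg _
  have hK : K ^ 2 = S ^ 2 + m := sq_sqrt (by positivity)
  set δ := min (1 / 4) (1 / (6 * K))
  have hδ0 : 0 ≤ δ := by positivity
  have hδ : δ ≤ 1 / 4 := min_le_left _ _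
  have hδK : δ * (6 * K) ≤ 1 := by
    rcases hK0.eq_or_lt with hK0 | hK0
    · simp [← hK0]
    · exact (le_div_iff₀ (by positivity)).1 (min_le_right _ _)
  have hSm : S + √m ≤ 3 / 2 * K := by
    nlinarith [sq_sqrt hm, sqrt_nonneg m, sq_nonneg (S - √m)]
  refine ⟨δ, hδ0, by linarith, by nlinarith, ?_⟩
  rcases min_cases (1 / 4 : ℝ) (1 / (6 * K)) with ⟨hmin, -⟩ | ⟨hmin, -⟩
  · rw [show δ = 1 / 4 from hmin]
    linarith [min_le_right (1 / (S ^ 2 + m)) (1 / 4)]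
  · have hδ2 : δ ^ 2 / 4 = 1 / 144 * (1 / (S ^ 2 + m)) := by
      rw [show δ = 1 / (6 * K) from hmin, ← hK]
      ring
    rw [hδ2]
    have : 0 ≤ 1 / (S ^ 2 + m) := by positivity
    linarith [min_le_left (1 / (S ^ 2 + m)) (1 / 4)]

theorem minimax_lower_bound_general (n : ℕ) (ε : ℕ → ℝ)
    (hpos : ∀ i < n, 0 < ε i)
    (M : Kernel (Fin n → ℝ) ℝ) [IsMarkovKernel M]
    (hDP : ∀ (i : Fin n) (x x' : Fin n → ℝ),
      (∀ j, x j ∈ Set.Icc (-(1 : ℝ) / 2) (1 / 2)) →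
      (∀ j, x' j ∈ Set.Icc (-(1 : ℝ) / 2) (1 / 2)) →
      (∀ j, j ≠ i → x j = x' j) →
      ∀ S : Set ℝ, MeasurableSet S →
        M x S ≤ ENNReal.ofReal (Real.exp (ε i.1)) * M x' S) :
    ENNReal.ofReal ((1 / 512) *
        min ((Finset.range (n + 1)).sup' Finset.nonempty_range_add_one
              (fun i => 1 / ((∑ j ∈ Finset.range i, ε j) ^ 2 + ((n - i : ℕ) : ℝ))))
            (1 / 4))
      ≤ ⨆ (P : Measure ℝ) (_ : IsProbabilityMeasure P)
          (_ : P (Set.Icc (-(1 : ℝ) / 2) (1 / 2)) = 1),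
          ∫⁻ x, (∫⁻ y, ENNReal.ofReal ((y - ∫ t, t ∂P) ^ 2) ∂(M x))
            ∂(Measure.pi fun _ : Fin n => P) := by
  obtain ⟨i, hi, hmax⟩ := exists_mem_eq_sup' nonempty_range_add_one
    fun i => 1 / ((∑ j ∈ range i, ε j) ^ 2 + ((n - i : ℕ) : ℝ))
  have hin : i ≤ n := Nat.lt_succ_iff.1 (mem_range.1 hi)
  have hε : ∀ k < i, 0 ≤ ε k := fun k hk => (hpos k (by omega)).le
  obtain ⟨δ, hδ0, hδ, hbudget, hbound⟩ :=
    exists_separation (S := ∑ k ∈ range i, ε k) (Nat.cast_nonneg (n - i))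
  rw [hmax]
  exact (ENNReal.ofReal_le_ofReal hbound).trans
    (ofReal_sq_div_four_le_worstCaseRisk hDP hin hε hδ0 hδ hbudget)

/-- Lower bound: For `n ≥ 1` and nondecreasing positive privacy levels
`ε` (0-indexed), any Markov kernel `M` from `(Fin n → ℝ)` to `ℝ` satisfying the
heterogeneous `ε`-DP constraint on datasets in `[-1/2, 1/2]ⁿ` has worst-case
mean-squared error at least `(1/512) * min (H ε) (1/4)`, where
`H ε = max_{0 ≤ i ≤ n} 1 / ((∑_{j<i} ε j)² + (n - i))`. -/
theorem minimax_lower_bound (n : ℕ) (hn : 1 ≤ n) (ε : ℕ → ℝ)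
    (hpos : ∀ i < n, 0 < ε i)
    (hmono : ∀ i j : ℕ, i ≤ j → j < n → ε i ≤ ε j)
    (M : Kernel (Fin n → ℝ) ℝ) [IsMarkovKernel M]
    (hDP : ∀ (i : Fin n) (x x' : Fin n → ℝ),
      (∀ j, x j ∈ Set.Icc (-(1 : ℝ) / 2) (1 / 2)) →
      (∀ j, x' j ∈ Set.Icc (-(1 : ℝ) / 2) (1 / 2)) →
      (∀ j, j ≠ i → x j = x' j) →
      ∀ S : Set ℝ, MeasurableSet S →
        M x S ≤ ENNReal.ofReal (Real.exp (ε i.1)) * M x' S) :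
    ENNReal.ofReal ((1 / 512) *
        min ((Finset.range (n + 1)).sup' Finset.nonempty_range_add_one
              (fun i => 1 / ((∑ j ∈ Finset.range i, ε j) ^ 2 + ((n - i : ℕ) : ℝ))))
            (1 / 4))
      ≤ ⨆ (P : Measure ℝ) (_ : IsProbabilityMeasure P)
          (_ : P (Set.Icc (-(1 : ℝ) / 2) (1 / 2)) = 1),
          ∫⁻ x, (∫⁻ y, ENNReal.ofReal ((y - ∫ t, t ∂P) ^ 2) ∂(M x))
            ∂(Measure.pi fun _ : Fin n => P) :=
  minimax_lower_bound_general n ε hpos M hDP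
end
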